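/- arXiv:2505.08839 — 7 statements merged into one kernel-verified Lean document; each statement's English description precedes it below -/
import Mathlib

section
/- Let ω be a weight function in the class W₀ and let {W^(ℓ) : ℓ > 0} be its associated weight matrix. Then for all x > 0 and all c ∈ ℕ_{>0}: g(W^(cx)) ≤ g(W^(x)) ≤ 4·g(W^(cx)) and g(W^(x)) ≤ g(W^(x/c)) ≤ 4·g(W^(x)) (inequalities understood in ℕ ∪ {+∞}). -/
open Real Filter Set

noncomputable section

/-- The class `LC` of normalized log-convex sequences with `(M_p)^{1/p} → ∞`. -/
def IsLC (M : ℕ → ℝ) : Prop :=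
  (∀ p, 0 < M p) ∧ M 0 = 1 ∧ 1 ≤ M 1 ∧
  (∀ p : ℕ, 1 ≤ p → (M p) ^ 2 ≤ M (p - 1) * M (p + 1)) ∧
  Filter.Tendsto (fun p : ℕ => (M p) ^ ((p : ℝ)⁻¹)) Filter.atTop Filter.atTop

/-- The sequence of quotients `μ_0 = 1`, `μ_p = M_p / M_{p-1}`. -/
def seqQuot (M : ℕ → ℝ) (p : ℕ) : ℝ :=
  if p = 0 then 1 else M p / M (p - 1)

/-- The associated weight function `ω_M(t) = sup_p log(t^p / M_p)`. -/
def omegaM (M : ℕ → ℝ) (t : ℝ) : ℝ :=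
  ⨆ p : ℕ, Real.log (t ^ p / M p)

/-- The auxiliary sequence `M̃^a_p = (M_{ap})^{1/a}`. -/
def tildeSeq (M : ℕ → ℝ) (a : ℕ) (p : ℕ) : ℝ :=
  (M (a * p)) ^ ((a : ℝ)⁻¹)

/-- Condition (genmg) for the parameter `d`. -/
def genMG (M : ℕ → ℝ) (d : ℕ) : Prop :=
  ∃ A : ℝ, 1 ≤ A ∧ ∀ p : ℕ, 1 ≤ p →
    seqQuot M p ≤ A * (M (d * p)) ^ (((d : ℝ) * (p : ℝ))⁻¹)

/-- The moderate growth index `g(M) ∈ ℕ ∪ {+∞}`. -/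
def gIndex (M : ℕ → ℝ) : ℕ∞ :=
  sInf {e : ℕ∞ | ∃ n : ℕ, 0 < n ∧ genMG M n ∧ e = (n : ℕ∞)}

/-- The relation `M ≼ N`, i.e. `sup_{p ≥ 1} (M_p/N_p)^{1/p} < ∞`. -/
def Preceq (M N : ℕ → ℝ) : Prop :=
  ∃ C : ℝ, ∀ p : ℕ, 1 ≤ p → (M p / N p) ^ ((p : ℝ)⁻¹) ≤ C

/-- The class `W₀` of normalized weight functions. -/
def IsW0 (ω : ℝ → ℝ) : Prop :=
  ContinuousOn ω (Set.Ici 0) ∧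
  MonotoneOn ω (Set.Ici 0) ∧
  (∀ t ∈ Set.Icc (0 : ℝ) 1, ω t = 0) ∧
  Filter.Tendsto ω Filter.atTop Filter.atTop ∧
  (fun t => Real.log t) =o[Filter.atTop] ω ∧
  ConvexOn ℝ Set.univ (fun t => ω (Real.exp t))

/-- The Legendre–Fenchel–Young conjugate `φ*_ω(x) = sup{xy − ω(e^y) : y ≥ 0}`. -/
def phiStar (ω : ℝ → ℝ) (x : ℝ) : ℝ :=
  sSup {z : ℝ | ∃ y : ℝ, 0 ≤ y ∧ z = x * y - ω (Real.exp y)}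

/-- The associated weight matrix `W^(ℓ)_p = exp(φ*_ω(ℓp)/ℓ)`. -/
def Wmat (ω : ℝ → ℝ) (l : ℝ) (p : ℕ) : ℝ :=
  Real.exp (phiStar ω (l * p) / l)

/-- Condition `(ω₆)`. -/
def Omega6 (ω : ℝ → ℝ) : Prop :=
  ∃ H : ℝ, 1 ≤ H ∧ ∀ t : ℝ, 0 ≤ t → 2 * ω t ≤ ω (H * t) + H

/-- The counting function `Σ_M(t) = #{p ≥ 1 : μ_p ≤ t}`. -/
def SigmaM (M : ℕ → ℝ) (t : ℝ) : ℕ :=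
  Set.ncard {p : ℕ | 1 ≤ p ∧ seqQuot M p ≤ t}


/-! The conjugate `φ*_ω` is convex on `[0, ∞)` with `φ*_ω(0) = 0`, and taking logarithms turns
(genmg) for `W^(ℓ)` into a comparison of secant slopes of `φ*_ω`: the slope over `[ℓ(p-1), ℓp]`
is at most a constant plus the slope over `[0, ℓdp]`. Convexity makes slopes monotone in both
endpoints. So passing from `ℓ` to `cℓ` keeps the bound with the same `d` (use the hypothesis at
`cp`), and passing back from `cℓ` to `ℓ` keeps it with `2d` (use the hypothesis at
`q = ⌈(p-1)/c⌉ + 1`, for which `cq ≤ 2p` once `p > 2c`; the finitely many small `p` only cost a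
constant). Hence `g(W^(cℓ)) ≤ g(W^(ℓ)) ≤ 2 g(W^(cℓ))`. -/

section SlopeMono

variable {𝕜 : Type*} [Field 𝕜] [LinearOrder 𝕜] [IsStrictOrderedRing 𝕜] {s : Set 𝕜}
  {f : 𝕜 → 𝕜} {a b a' b' : 𝕜}

theorem ConvexOn.slope_le_slope_of_le_of_le (hf : ConvexOn 𝕜 s f) (ha : a ∈ s) (hb : b ∈ s)
    (ha' : a' ∈ s) (hb' : b' ∈ s) (hab : a < b) (hab' : a' < b') (haa' : a ≤ a')
    (hbb' : b ≤ b') : slope f a b ≤ slope f a' b' :=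
  calc slope f a b ≤ slope f a b' :=
        hf.slope_mono ha ⟨hb, hab.ne'⟩ ⟨hb', (hab.trans_le hbb').ne'⟩ hbb'
    _ = slope f b' a := slope_comm f a b'
    _ ≤ slope f b' a' :=
        hf.slope_mono hb' ⟨ha, (hab.trans_le hbb').ne⟩ ⟨ha', hab'.ne⟩ haa'
    _ = slope f a' b' := slope_comm f b' a'

end SlopeMono

section Conjugate

variable {ω : ℝ → ℝ}

lemma IsW0.nonneg_of_one_le (hω : IsW0 ω) {t : ℝ} (ht : 1 ≤ t) : 0 ≤ ω t :=
  hω.2.2.1 1 ⟨zero_le_one, le_rfl⟩ ▸ hω.2.1 (mem_Ici.mpr zero_le_one)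
    (mem_Ici.mpr (zero_le_one.trans ht)) ht

lemma phiStar_le {x C : ℝ} (h : ∀ y, 0 ≤ y → x * y - ω (exp y) ≤ C) :
    phiStar ω x ≤ C :=
  csSup_le ⟨_, 0, le_rfl, rfl⟩ fun _ ⟨y, hy, hz⟩ => hz ▸ h y hy

lemma IsW0.bddAbove_conj (hω : IsW0 ω) {x : ℝ} (hx : 0 ≤ x) :
    BddAbove {z : ℝ | ∃ y : ℝ, 0 ≤ y ∧ z = x * y - ω (exp y)} := by
  -- `y = o(ω(e^y))`, so eventually `(x + 1) y ≤ ω(e^y)` and `xy - ω(e^y) ≤ -y ≤ 0`.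
  have hlin : (fun y : ℝ => y) =o[atTop] fun y => ω (exp y) :=
    (hω.2.2.2.2.1.comp_tendsto tendsto_exp_atTop).congr_left fun y => log_exp y
  obtain ⟨Y, hY⟩ := eventually_atTop.mp (hlin.bound (inv_pos.mpr (by linarith : 0 < x + 1)))
  refine ⟨max (x * Y) 0, ?_⟩
  rintro _ ⟨y, hy, rfl⟩
  have hωy : 0 ≤ ω (exp y) := hω.nonneg_of_one_le (one_le_exp hy)
  rcases lt_or_ge y Y with hyY | hYy
  · nlinarith [le_max_left (x * Y) 0]
  · have hbound := hY y hYy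
    rw [norm_of_nonneg hy, norm_of_nonneg hωy, ← div_eq_inv_mul,
      le_div_iff₀ (by linarith)] at hbound
    nlinarith [le_max_right (x * Y) 0]

lemma IsW0.le_phiStar (hω : IsW0 ω) {x y : ℝ} (hx : 0 ≤ x) (hy : 0 ≤ y) :
    x * y - ω (exp y) ≤ phiStar ω x :=
  le_csSup (hω.bddAbove_conj hx) ⟨y, hy, rfl⟩

lemma IsW0.phiStar_zero (hω : IsW0 ω) : phiStar ω 0 = 0 := by
  refine le_antisymm (phiStar_le fun y hy => ?_) ?_
  · simpa using hω.nonneg_of_one_le (one_le_exp hy)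
  · simpa [hω.2.2.1 1 ⟨zero_le_one, le_rfl⟩] using hω.le_phiStar le_rfl le_rfl

lemma IsW0.convexOn_phiStar (hω : IsW0 ω) : ConvexOn ℝ (Ici 0) (phiStar ω) := by
  refine ⟨convex_Ici 0, fun a ha b hb s t hs ht hst => ?_⟩
  simp only [smul_eq_mul]
  refine phiStar_le fun y hy => ?_
  have hsplit : (s * a + t * b) * y - ω (exp y)
      = s * (a * y - ω (exp y)) + t * (b * y - ω (exp y)) := by
    linear_combination ω (exp y) * hst
  rw [hsplit]
  gcongr
  exacts [hω.le_phiStar ha hy, hω.le_phiStar hb hy]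

end Conjugate

section SlopeGenMG

variable {f : ℝ → ℝ} {l : ℝ}

def SlopeGenMG (f : ℝ → ℝ) (l : ℝ) (d : ℕ) : Prop :=
  ∃ B : ℝ, ∀ p : ℕ, 1 ≤ p →
    slope f (l * (p - 1)) (l * p) ≤ B + slope f 0 (l * (d * p))

lemma genMG_exp_iff_slopeGenMG (hf0 : f 0 = 0) (l : ℝ) (d : ℕ) :
    genMG (fun p => exp (f (l * p) / l)) d ↔ SlopeGenMG f l d := by
  have hquot : ∀ p : ℕ, 1 ≤ p →
      seqQuot (fun p => exp (f (l * p) / l)) p = exp (slope f (l * (p - 1)) (l * p)) := by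
    intro p hp
    rw [seqQuot, if_neg (by omega), ← exp_sub, slope_def_field, Nat.cast_sub hp]
    congr 1
    ring_nf
  have hroot : ∀ p : ℕ, exp (f (l * (d * p : ℕ)) / l) ^ ((d : ℝ) * p)⁻¹
      = exp (slope f 0 (l * (d * p))) := by
    intro p
    rw [← exp_mul, slope_def_field, hf0]
    push_cast
    congr 1
    ring
  refine ⟨fun ⟨A, hA, h⟩ => ⟨log A, fun p hp => ?_⟩, fun ⟨B, h⟩ => ⟨exp (max B 0),
    one_le_exp (le_max_right B 0), fun p hp => ?_⟩⟩
  · have := h p hp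
    rwa [hquot p hp, hroot, ← exp_log (zero_lt_one.trans_le hA), ← exp_add,
      exp_le_exp] at this
  · rw [hquot p hp, hroot, ← exp_add, exp_le_exp]
    linarith [h p hp, le_max_left B 0]

lemma SlopeGenMG.natCast_mul (hf : ConvexOn ℝ (Ici 0) f) (hl : 0 < l) {c d : ℕ} (hc : 1 ≤ c)
    (h : SlopeGenMG f l d) : SlopeGenMG f (c * l) d := by
  obtain ⟨B, hB⟩ := h
  refine ⟨B, fun p hp => ?_⟩
  have hC : (1 : ℝ) ≤ c := Nat.one_le_cast.mpr hc
  have hP : (1 : ℝ) ≤ p := Nat.one_le_cast.mpr hp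
  have hCP : 1 ≤ (c : ℝ) * p := one_le_mul_of_one_le_of_one_le hC hP
  have hcp := hB (c * p) (Nat.one_le_iff_ne_zero.mpr (by positivity))
  push_cast at hcp
  calc slope f (c * l * (p - 1)) (c * l * p)
      ≤ slope f (l * (c * p - 1)) (l * (c * p)) :=
        hf.slope_le_slope_of_le_of_le (mem_Ici.mpr (mul_nonneg (by positivity) (by linarith)))
          (mem_Ici.mpr (by positivity)) (mem_Ici.mpr (mul_nonneg hl.le (by linarith)))
          (mem_Ici.mpr (by positivity)) (by nlinarith) (by nlinarith) (by nlinarith)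
          (le_of_eq (by ring))
    _ ≤ B + slope f 0 (l * (d * (c * p))) := hcp
    _ = B + slope f 0 (c * l * (d * p)) := by ring_nf

lemma SlopeGenMG.of_mul (hf : ConvexOn ℝ (Ici 0) f) (hl : 0 < l) {c : ℝ} (hc : 1 ≤ c) {d : ℕ}
    (hd : 0 < d) (h : SlopeGenMG f (c * l) d) : SlopeGenMG f l (2 * d) := by
  obtain ⟨B, hB⟩ := h
  set N : ℕ := ⌈2 * c⌉₊
  have hN : 2 * c ≤ N := Nat.le_ceil _
  refine ⟨max B (slope f (l * (N - 1)) (l * N) - slope f 0 (l * (2 * d))), fun p hp => ?_⟩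
  have hP : (1 : ℝ) ≤ p := Nat.one_le_cast.mpr hp
  have hslope0 : ∀ {u v : ℝ}, 0 < u → u ≤ v → slope f 0 u ≤ slope f 0 v := fun hu huv =>
    hf.monotoneOn_slope_gt self_mem_Ici ⟨hu.le, hu⟩ ⟨hu.le.trans huv, hu.trans_le huv⟩ huv
  push_cast
  rcases le_or_gt (p : ℝ) (2 * c) with hsmall | hbig
  · have hleft : slope f (l * (p - 1)) (l * p) ≤ slope f (l * (N - 1)) (l * N) :=
      hf.slope_le_slope_of_le_of_le (mem_Ici.mpr (by nlinarith)) (mem_Ici.mpr (by positivity))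
        (mem_Ici.mpr (by nlinarith)) (mem_Ici.mpr (by positivity)) (by linarith) (by linarith)
        (by nlinarith) (by nlinarith)
    have hright : slope f 0 (l * (2 * d)) ≤ slope f 0 (l * (2 * d * p)) :=
      hslope0 (by positivity)
        (by nlinarith [mul_le_mul_of_nonneg_left hP (by positivity : (0 : ℝ) ≤ l * (2 * d))])
    linarith [le_max_right B (slope f (l * (N - 1)) (l * N) - slope f 0 (l * (2 * d)))]
  · set k : ℕ := ⌈(p - 1) / c⌉₊
    have hc0 : 0 < c := by linarith
    have hk : p - 1 ≤ c * k := by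
      rw [← div_le_iff₀' hc0]
      exact Nat.le_ceil _
    have hk' : c * k < p - 1 + c := by
      have := Nat.ceil_lt_add_one (div_nonneg (by linarith : (0 : ℝ) ≤ p - 1) hc0.le)
      rw [← lt_div_iff₀' hc0, add_div, div_self hc0.ne']
      exact this
    have hq := hB (k + 1) (Nat.le_add_left 1 k)
    simp only [Nat.cast_add, Nat.cast_one, add_sub_cancel_right] at hq
    calc slope f (l * (p - 1)) (l * p)
        ≤ slope f (c * l * k) (c * l * (k + 1)) :=
          hf.slope_le_slope_of_le_of_le (mem_Ici.mpr (by nlinarith))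
            (mem_Ici.mpr (by positivity)) (mem_Ici.mpr (by positivity))
            (mem_Ici.mpr (by positivity)) (by nlinarith) (by nlinarith) (by nlinarith)
            (by nlinarith)
      _ ≤ B + slope f 0 (c * l * (d * (k + 1))) := hq
      _ ≤ max B (slope f (l * (N - 1)) (l * N) - slope f 0 (l * (2 * d)))
            + slope f 0 (l * (2 * d * p)) := by
          gcongr
          · exact le_max_left _ _
          · have hcq : c * (k + 1) ≤ 2 * p := by linarith
            exact hslope0 (by positivity)
              (by nlinarith [mul_le_mul_of_nonneg_left hcq (by positivity : (0 : ℝ) ≤ l * d)])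

end SlopeGenMG

section GIndex

variable {M N : ℕ → ℝ}

lemma gIndex_le_of_genMG {n : ℕ} (hn : 0 < n) (h : genMG M n) : gIndex M ≤ n :=
  sInf_le ⟨n, hn, h, rfl⟩

lemma exists_genMG_of_gIndex_ne_top (h : gIndex M ≠ ⊤) :
    ∃ n : ℕ, 0 < n ∧ genMG M n ∧ gIndex M = n := by
  have hne : {e : ℕ∞ | ∃ n : ℕ, 0 < n ∧ genMG M n ∧ e = n}.Nonempty := by
    rw [nonempty_iff_ne_empty]
    rintro hempty
    exact h (by rw [gIndex, hempty]; exact sInf_empty)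
  exact csInf_mem hne

lemma gIndex_le_mul_of_genMG_imp {k : ℕ} (hk : 0 < k)
    (h : ∀ n : ℕ, 0 < n → genMG M n → genMG N (k * n)) : gIndex N ≤ k * gIndex M := by
  rcases eq_or_ne (gIndex M) ⊤ with htop | htop
  · simp [htop, ENat.mul_top (Nat.cast_ne_zero.mpr hk.ne')]
  · obtain ⟨n, hn, hgen, heq⟩ := exists_genMG_of_gIndex_ne_top htop
    rw [heq, ← Nat.cast_mul]
    exact gIndex_le_of_genMG (Nat.mul_pos hk hn) (h n hn hgen)

end GIndex

section WeightMatrix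

variable {ω : ℝ → ℝ} {l : ℝ}

lemma IsW0.genMG_Wmat_iff (hω : IsW0 ω) (l : ℝ) (d : ℕ) :
    genMG (Wmat ω l) d ↔ SlopeGenMG (phiStar ω) l d :=
  genMG_exp_iff_slopeGenMG hω.phiStar_zero l d

lemma IsW0.gIndex_Wmat_natCast_mul_le (hω : IsW0 ω) (hl : 0 < l) {c : ℕ} (hc : 1 ≤ c) :
    gIndex (Wmat ω (c * l)) ≤ gIndex (Wmat ω l) := by
  simpa using gIndex_le_mul_of_genMG_imp one_pos fun n _ h => by
    rw [one_mul, hω.genMG_Wmat_iff] at *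
    exact h.natCast_mul hω.convexOn_phiStar hl hc

lemma IsW0.gIndex_Wmat_le_two_mul (hω : IsW0 ω) (hl : 0 < l) {c : ℝ} (hc : 1 ≤ c) :
    gIndex (Wmat ω l) ≤ 2 * gIndex (Wmat ω (c * l)) := by
  simpa using gIndex_le_mul_of_genMG_imp two_pos fun n hn h => by
    rw [hω.genMG_Wmat_iff] at *
    exact h.of_mul hω.convexOn_phiStar hl hc hn

end WeightMatrix

theorem stmt0 (ω : ℝ → ℝ) (hω : IsW0 ω) (x : ℝ) (hx : 0 < x) (c : ℕ) (hc : 0 < c) :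
    (gIndex (Wmat ω ((c : ℝ) * x)) ≤ gIndex (Wmat ω x) ∧
      gIndex (Wmat ω x) ≤ 4 * gIndex (Wmat ω ((c : ℝ) * x))) ∧
    (gIndex (Wmat ω x) ≤ gIndex (Wmat ω (x / (c : ℝ))) ∧
      gIndex (Wmat ω (x / (c : ℝ))) ≤ 4 * gIndex (Wmat ω x)) := by
  have hC : (1 : ℝ) ≤ c := Nat.one_le_cast.mpr hc
  have two_mul_le : ∀ g : ℕ∞, 2 * g ≤ 4 * g := fun g => by gcongr; norm_num
  have hxc : 0 < x / c := by positivity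
  have hcancel : (c : ℝ) * (x / c) = x := mul_div_cancel₀ x (by positivity)
  have hdown := hω.gIndex_Wmat_natCast_mul_le hxc hc
  have hup := hω.gIndex_Wmat_le_two_mul hxc hC
  rw [hcancel] at hdown hup
  exact ⟨⟨hω.gIndex_Wmat_natCast_mul_le hx hc,
      (hω.gIndex_Wmat_le_two_mul hx hC).trans (two_mul_le _)⟩,
    ⟨hdown, hup.trans (two_mul_le _)⟩⟩
end
end

section
/- Let M and N belong to the class LC, let ω_M and ω_N be their associated weight functions, and let {M^(x) : x > 0} and {N^(x) : x > 0} be the weight matrices associated with ω_M and ω_N respectively. If M ≼ N, then: (1) there exists C ≥ 1 (any constant with M_p ≤ C^p·N_p for all p) such that for all x ∈ ℕ_{>0} and all p ∈ ℕ one has M^(x)_p ≤ C^p·N^(x)_p; and (2) for every x ∈ ℕ_{>0} there exists C_x ≥ 1 (one may take C_x := C·M^(1/x)_{2x}) such that for all p ∈ ℕ one has M^(1/(2x))_p ≤ C_x^p·N^(1/x)_p. -/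
open Real Filter Set

section Aux

variable {M N : ℕ → ℝ}

lemma isLC_one_le (hM : IsLC M) : ∀ p, 1 ≤ M p := by
  obtain ⟨hpos, h0, h1, hconv, -⟩ := hM
  have hq : ∀ p : ℕ, 1 ≤ M (p + 1) / M p := by
    intro p
    induction p with
    | zero => rw [h0, div_one]; exact h1
    | succ n ih =>
      have hc := hconv (n + 1) (Nat.le_add_left 1 n)
      simp only [Nat.add_sub_cancel] at hc
      have : M (n + 1) / M n ≤ M (n + 2) / M (n + 1) := by
        rw [div_le_div_iff₀ (hpos n) (hpos (n + 1))]
        nlinarith [hc, sq_nonneg (M (n+1))]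
      linarith
  intro p
  induction p with
  | zero => rw [h0]
  | succ n ih =>
    have := hq n
    have hn := hpos n
    calc (1:ℝ) ≤ M n := ih
    _ ≤ M (n + 1) := (one_le_div hn).mp (hq n)

lemma bddAbove_omega (hM : IsLC M) (t : ℝ) :
    BddAbove (Set.range fun p : ℕ => Real.log (t ^ p / M p)) := by
  obtain ⟨P, hP⟩ := (hM.2.2.2.2.eventually_ge_atTop (|t| + 1)).exists_forall_of_atTop
  set f : ℕ → ℝ := fun p : ℕ => Real.log (t ^ p / M p) with hf
  have hsub : Set.range f ⊆ f '' (Set.Iio (P + 1)) ∪ Set.Iic 0 := by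
    rintro z ⟨p, rfl⟩
    by_cases hp : p < P + 1
    · exact Or.inl ⟨p, hp, rfl⟩
    · right
      push_neg at hp
      have hp0 : p ≠ 0 := by omega
      have h1 : (|t| + 1) ≤ M p ^ ((p : ℝ)⁻¹) := hP p (by omega)
      have hMp : (|t| + 1) ^ p ≤ M p := by
        calc (|t| + 1) ^ p ≤ (M p ^ ((p : ℝ)⁻¹)) ^ p :=
              pow_le_pow_left₀ (by positivity) h1 p
        _ = M p := Real.rpow_inv_natCast_pow (hM.1 p).le hp0
      have habs : f p = Real.log (|t| ^ p / M p) := by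
        rw [hf]
        simp only
        rw [← Real.log_abs, abs_div, abs_pow, abs_of_pos (hM.1 p)]
      rw [Set.mem_Iic, habs]
      apply Real.log_nonpos (div_nonneg (by positivity) (hM.1 p).le)
      rw [div_le_one (hM.1 p)]
      calc |t| ^ p ≤ (|t| + 1) ^ p := pow_le_pow_left₀ (abs_nonneg t) (by linarith) p
      _ ≤ M p := hMp
  exact (((Set.finite_Iio (P + 1)).image f).bddAbove.union bddAbove_Iic).mono hsub

lemma omega_ge (hM : IsLC M) (t : ℝ) (p : ℕ) :
    Real.log (t ^ p / M p) ≤ omegaM M t :=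
  le_ciSup (bddAbove_omega hM t) p

lemma omega_nonneg (hM : IsLC M) (t : ℝ) : 0 ≤ omegaM M t := by
  have := omega_ge hM t 0
  simpa [hM.2.1] using this

lemma omega_one (hM : IsLC M) : omegaM M 1 = 0 := by
  refine le_antisymm (ciSup_le fun p => ?_) (omega_nonneg hM 1)
  rw [one_pow]
  apply Real.log_nonpos (div_nonneg zero_le_one (hM.1 p).le)
  rw [div_le_one (hM.1 p)]
  exact isLC_one_le hM p

lemma phiStar_mem (ω : ℝ → ℝ) (x y : ℝ) (hy : 0 ≤ y) :
    x * y - ω (Real.exp y) ∈ {z : ℝ | ∃ y : ℝ, 0 ≤ y ∧ z = x * y - ω (Real.exp y)} :=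
  ⟨y, hy, rfl⟩

lemma phiStar_set_nonempty (ω : ℝ → ℝ) (x : ℝ) :
    {z : ℝ | ∃ y : ℝ, 0 ≤ y ∧ z = x * y - ω (Real.exp y)}.Nonempty :=
  ⟨_, phiStar_mem ω x 0 le_rfl⟩

lemma omega_exp_ge (hM : IsLC M) (p : ℕ) (y : ℝ) :
    (p : ℝ) * y - Real.log (M p) ≤ omegaM M (Real.exp y) := by
  have := omega_ge hM (Real.exp y) p
  rwa [Real.log_div (by positivity) (hM.1 p).ne', ← Real.exp_nat_mul,
    Real.log_exp] at this

lemma bddAbove_phiStar (hM : IsLC M) (x : ℝ) :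
    BddAbove {z : ℝ | ∃ y : ℝ, 0 ≤ y ∧ z = x * y - omegaM M (Real.exp y)} := by
  obtain ⟨p, hp⟩ := exists_nat_ge x
  refine ⟨Real.log (M p), ?_⟩
  rintro z ⟨y, hy, rfl⟩
  have h1 := omega_exp_ge hM p y
  nlinarith [mul_nonneg (sub_nonneg.mpr hp) hy]

lemma phiStar_nonneg (hM : IsLC M) (x : ℝ) (hx : 0 ≤ x) :
    0 ≤ phiStar (omegaM M) x := by
  have := le_csSup (bddAbove_phiStar hM x) (phiStar_mem (omegaM M) x 0 le_rfl)
  simpa [omega_one hM, phiStar] using this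

lemma phiStar_compare (hM : IsLC M) (hN : IsLC N) {C : ℝ} (hC1 : 1 ≤ C)
    (hC : ∀ p, M p ≤ C ^ p * N p) (x : ℝ) (hx : 0 ≤ x) :
    phiStar (omegaM M) x ≤ phiStar (omegaM N) x + x * Real.log C := by
  have hC0 : (0:ℝ) < C := lt_of_lt_of_le one_pos hC1
  have hlogC : 0 ≤ Real.log C := Real.log_nonneg hC1
  refine csSup_le (phiStar_set_nonempty _ _) ?_
  rintro z ⟨y, hy, rfl⟩
  by_cases hyc : y ≤ Real.log C
  · have h1 : x * y - omegaM M (Real.exp y) ≤ x * Real.log C := by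
      have := omega_nonneg hM (Real.exp y)
      nlinarith [mul_le_mul_of_nonneg_left hyc hx]
    linarith [phiStar_nonneg hN x hx]
  · push_neg at hyc
    set y' := y - Real.log C with hy'
    have hy'0 : 0 ≤ y' := by linarith
    have key : omegaM N (Real.exp y') ≤ omegaM M (Real.exp y) := by
      refine ciSup_le fun p => ?_
      refine le_trans ?_ (omega_ge hM (Real.exp y) p)
      apply Real.log_le_log (div_pos (by positivity) (hN.1 p))
      rw [div_le_div_iff₀ (hN.1 p) (hM.1 p)]
      have hce : C * Real.exp y' = Real.exp y := by
        rw [hy', Real.exp_sub, Real.exp_log hC0]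
        field_simp
      have h2 : Real.exp y ^ p = C ^ p * Real.exp y' ^ p := by
        rw [← mul_pow, hce]
      rw [h2]
      calc Real.exp y' ^ p * M p ≤ Real.exp y' ^ p * (C ^ p * N p) :=
            mul_le_mul_of_nonneg_left (hC p) (by positivity)
      _ = C ^ p * Real.exp y' ^ p * N p := by ring
    have hmem : x * y' - omegaM N (Real.exp y') ≤ phiStar (omegaM N) x :=
      le_csSup (bddAbove_phiStar hN x) (phiStar_mem (omegaM N) x y' hy'0)
    have : x * y - omegaM M (Real.exp y) ≤
        (x * y' - omegaM N (Real.exp y')) + x * Real.log C := by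
      rw [hy']; ring_nf; linarith [key]
    linarith

lemma phiStar_half (hM : IsLC M) (x : ℝ) (hx : 0 ≤ x) :
    phiStar (omegaM M) (x / 2) ≤ phiStar (omegaM M) x / 2 := by
  refine csSup_le (phiStar_set_nonempty _ _) ?_
  rintro z ⟨y, hy, rfl⟩
  have h1 : x * y - omegaM M (Real.exp y) ≤ phiStar (omegaM M) x :=
    le_csSup (bddAbove_phiStar hM x) (phiStar_mem _ x y hy)
  have h2 := omega_nonneg hM (Real.exp y)
  linarith

lemma Wmat_compare (hM : IsLC M) (hN : IsLC N) {C : ℝ} (hC1 : 1 ≤ C)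
    (hC : ∀ p, M p ≤ C ^ p * N p) {l : ℝ} (hl : 0 < l) (p : ℕ) :
    Wmat (omegaM M) l p ≤ C ^ p * Wmat (omegaM N) l p := by
  have hC0 : (0:ℝ) < C := lt_of_lt_of_le one_pos hC1
  have h1 := phiStar_compare hM hN hC1 hC (l * p) (by positivity)
  have h2 : phiStar (omegaM M) (l * p) / l ≤
      phiStar (omegaM N) (l * p) / l + p * Real.log C := by
    have h4 : (phiStar (omegaM N) (l * p) + l * p * Real.log C) / l =
        phiStar (omegaM N) (l * p) / l + (p : ℝ) * Real.log C := by
      field_simp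
    rw [← h4]
    exact (div_le_div_iff_of_pos_right hl).mpr h1
  calc Wmat (omegaM M) l p ≤
      Real.exp (phiStar (omegaM N) (l * p) / l + p * Real.log C) :=
        Real.exp_le_exp.mpr h2
  _ = C ^ p * Wmat (omegaM N) l p := by
      rw [Real.exp_add, Wmat, Real.exp_nat_mul, Real.exp_log hC0]
      ring

lemma Wmat_halfscale (hM : IsLC M) {l : ℝ} (hl : 0 < l) (p : ℕ) :
    Wmat (omegaM M) (l / 2) p ≤ Wmat (omegaM M) l p := by
  unfold Wmat
  apply Real.exp_le_exp.mpr
  have h0 : l / 2 * p = l * p / 2 := by ring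
  rw [h0]
  have h1 := phiStar_half hM (l * p) (by positivity)
  rw [div_le_div_iff₀ (by linarith) hl]
  nlinarith [h1]

lemma Wmat_one_le (hM : IsLC M) {l : ℝ} (hl : 0 < l) (p : ℕ) :
    1 ≤ Wmat (omegaM M) l p :=
  Real.one_le_exp (div_nonneg (phiStar_nonneg hM _ (by positivity)) hl.le)

end Aux


theorem stmt1 (M N : ℕ → ℝ) (hM : IsLC M) (hN : IsLC N) (h : Preceq M N) :
    ∃ C : ℝ, 1 ≤ C ∧ (∀ p : ℕ, M p ≤ C ^ p * N p) ∧
      (∀ x : ℕ, 1 ≤ x → ∀ p : ℕ,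
        Wmat (omegaM M) (x : ℝ) p ≤ C ^ p * Wmat (omegaM N) (x : ℝ) p) ∧
      (∀ x : ℕ, 1 ≤ x → ∀ p : ℕ,
        Wmat (omegaM M) (1 / (2 * (x : ℝ))) p ≤
          (C * Wmat (omegaM M) (1 / (x : ℝ)) (2 * x)) ^ p *
            Wmat (omegaM N) (1 / (x : ℝ)) p) := by
  obtain ⟨C₀, hC₀⟩ := h
  set C : ℝ := max C₀ 1 with hCdef
  have hC1 : 1 ≤ C := le_max_right _ _
  have h1 : ∀ p : ℕ, M p ≤ C ^ p * N p := by
    intro p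
    rcases Nat.eq_zero_or_pos p with hp | hp
    · subst hp
      simp [hM.2.1, hN.2.1]
    · have ha : 0 < M p / N p := div_pos (hM.1 p) (hN.1 p)
      have h2 : (M p / N p) ^ ((p : ℝ)⁻¹) ≤ C :=
        le_trans (hC₀ p hp) (le_max_left _ _)
      have h3 : M p / N p ≤ C ^ p := by
        calc M p / N p = ((M p / N p) ^ ((p : ℝ)⁻¹)) ^ p :=
              (Real.rpow_inv_natCast_pow ha.le (by omega)).symm
        _ ≤ C ^ p := pow_le_pow_left₀ (Real.rpow_nonneg ha.le _) h2 p
      rwa [div_le_iff₀ (hN.1 p)] at h3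
  refine ⟨C, hC1, h1, ?_, ?_⟩
  · intro x hx p
    exact Wmat_compare hM hN hC1 h1 (by exact_mod_cast Nat.cast_pos.mpr hx) p
  · intro x hx p
    have hx0 : (0:ℝ) < (x : ℝ) := Nat.cast_pos.mpr hx
    have hl : (0:ℝ) < 1 / (x : ℝ) := by positivity
    have he : 1 / (2 * (x : ℝ)) = (1 / (x : ℝ)) / 2 := by ring
    have hW1 : 1 ≤ Wmat (omegaM M) (1 / (x : ℝ)) (2 * x) := Wmat_one_le hM hl _
    calc Wmat (omegaM M) (1 / (2 * (x : ℝ))) p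
        = Wmat (omegaM M) ((1 / (x : ℝ)) / 2) p := by rw [he]
    _ ≤ Wmat (omegaM M) (1 / (x : ℝ)) p := Wmat_halfscale hM hl p
    _ ≤ C ^ p * Wmat (omegaM N) (1 / (x : ℝ)) p := Wmat_compare hM hN hC1 h1 hl p
    _ ≤ (C * Wmat (omegaM M) (1 / (x : ℝ)) (2 * x)) ^ p *
          Wmat (omegaM N) (1 / (x : ℝ)) p := by
        apply mul_le_mul_of_nonneg_right _ (Real.exp_pos _).le
        apply pow_le_pow_left₀ (by linarith)
        nlinarith
end

section
/- Let M and L belong to the class LC. Then the following are equivalent: (i) there exist a ∈ ℕ_{>0} and B ≥ 1 such that ω_L(t) + ω_{M̃^a}(t) ≤ ω_L(Bt) + B for all t ≥ 0; (ii) there exist a ∈ ℕ_{>0} and C ≥ 1 such that ω_M(t) ≤ a·(ω_L(Ct) − ω_L(t)) + C for all t ≥ 0; (iii) there exist a ∈ ℕ_{>0} and H ≥ 1 such that L_p ≤ H^p·L_q·(M_{a(p−q)})^{1/a} for all p ∈ ℕ and all 0 ≤ q ≤ p. Moreover, in (i) and (iii) one can take the same parameter a; if (i) holds with a then (ii) holds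 with 2a; and if (ii) holds with a then (i) holds with the same a. -/
open Real Filter Set

section Helpers

variable {M N : ℕ → ℝ}

private lemma lc_q_mono (h : IsLC M) : Monotone (fun j => M (j+1) / M j) := by
  apply monotone_nat_of_le_succ
  intro j
  have h2 := h.2.2.2.1 (j+1) (by omega)
  simp only [Nat.add_sub_cancel] at h2
  have hj := h.1 j
  have hj1 := h.1 (j+1)
  have hj2 := h.1 (j+2)
  rw [div_le_div_iff₀ hj hj1]
  nlinarith [h2]

private lemma lc_q_one_le (h : IsLC M) (j : ℕ) : 1 ≤ M (j+1) / M j := by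
  have h0 : (1:ℝ) ≤ M 1 / M 0 := by rw [h.2.1]; simpa using h.2.2.1
  exact le_trans h0 (lc_q_mono h (Nat.zero_le j))

private lemma lc_one_le (h : IsLC M) (p : ℕ) : 1 ≤ M p := by
  induction p with
  | zero => rw [h.2.1]
  | succ n ih =>
    have := lc_q_one_le h n
    have hn := h.1 n
    nlinarith [(one_le_div hn).mp this]

private lemma lc_up (h : IsLC M) (m k : ℕ) : M m * (M (m+1) / M m) ^ k ≤ M (m+k) := by
  induction k with
  | zero => simp
  | succ k ih =>
    have hq : M (m+1)/M m ≤ M (m+k+1)/M (m+k) := lc_q_mono h (by omega)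
    have hq0 : 0 < M (m+1)/M m := div_pos (h.1 _) (h.1 _)
    calc M m * (M (m+1)/M m) ^ (k+1) = (M m * (M (m+1)/M m) ^ k) * (M (m+1)/M m) := by ring
    _ ≤ M (m+k) * (M (m+1)/M m) := by
        apply mul_le_mul_of_nonneg_right ih hq0.le
    _ ≤ M (m+k) * (M (m+k+1)/M (m+k)) := by
        apply mul_le_mul_of_nonneg_left hq (h.1 _).le
    _ = M (m+k+1) := mul_div_cancel₀ _ (h.1 (m+k)).ne'
    _ = M (m+(k+1)) := by ring_nf

private lemma lc_down (h : IsLC M) (m k : ℕ) :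
    M (m+k+1) ≤ M (m+1) * (M (m+k+1) / M (m+k)) ^ k := by
  induction k with
  | zero => simp
  | succ k ih =>
    have hq : M (m+k+1)/M (m+k) ≤ M (m+k+2)/M (m+k+1) := lc_q_mono h (by omega)
    have hq0 : 0 ≤ M (m+k+1)/M (m+k) := (div_pos (h.1 _) (h.1 _)).le
    have hpow : (M (m+k+1)/M (m+k)) ^ k ≤ (M (m+k+2)/M (m+k+1)) ^ k :=
      pow_le_pow_left₀ hq0 hq k
    show M (m+k+2) ≤ M (m+1) * (M (m+k+2)/M (m+k+1)) ^ (k+1)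
    calc M (m+k+2) = M (m+k+1) * (M (m+k+2)/M (m+k+1)) :=
          (mul_div_cancel₀ _ (h.1 (m+k+1)).ne').symm
    _ ≤ (M (m+1) * (M (m+k+1)/M (m+k)) ^ k) * (M (m+k+2)/M (m+k+1)) :=
        mul_le_mul_of_nonneg_right ih (div_pos (h.1 _) (h.1 _)).le
    _ ≤ (M (m+1) * (M (m+k+2)/M (m+k+1)) ^ k) * (M (m+k+2)/M (m+k+1)) :=
        mul_le_mul_of_nonneg_right
          (mul_le_mul_of_nonneg_left hpow (h.1 _).le) (div_pos (h.1 _) (h.1 _)).le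
    _ = M (m+1) * (M (m+k+2)/M (m+k+1)) ^ (k+1) := by ring

private lemma lc_g1' (h : IsLC M) (m : ℕ) : M (m+1) ≤ (M (m+1) / M m) ^ (m+1) := by
  induction m with
  | zero => rw [h.2.1]; simp
  | succ m ih =>
    have hq : M (m+1)/M m ≤ M (m+2)/M (m+1) := lc_q_mono h (by omega)
    have hq0 : 0 ≤ M (m+1)/M m := (div_pos (h.1 _) (h.1 _)).le
    calc M (m+2) = M (m+1) * (M (m+2)/M (m+1)) := by
          rw [mul_div_cancel₀ _ (h.1 (m+1)).ne']
    _ ≤ (M (m+1)/M m) ^ (m+1) * (M (m+2)/M (m+1)) := by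
        apply mul_le_mul_of_nonneg_right ih (div_pos (h.1 _) (h.1 _)).le
    _ ≤ (M (m+2)/M (m+1)) ^ (m+1) * (M (m+2)/M (m+1)) := by
        apply mul_le_mul_of_nonneg_right (pow_le_pow_left₀ hq0 hq _) (div_pos (h.1 _) (h.1 _)).le
    _ = (M (m+2)/M (m+1)) ^ (m+2) := by ring

private lemma lc_g1 (h : IsLC M) (m : ℕ) : M m ≤ (M (m+1) / M m) ^ m := by
  cases m with
  | zero => rw [h.2.1]; simp
  | succ k =>
    refine (lc_g1' h k).trans (pow_le_pow_left₀ (div_pos (h.1 _) (h.1 _)).le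
      (lc_q_mono h (by omega)) _)

/-- `M_m ^ n ≤ M_n ^ m` for `m ≤ n`. -/
private lemma lc_pow_le (h : IsLC M) {m n : ℕ} (hmn : m ≤ n) : M m ^ n ≤ M n ^ m := by
  obtain ⟨k, rfl⟩ := Nat.exists_eq_add_of_le hmn
  have hm := h.1 m
  have hq0 : 0 < M (m+1)/M m := div_pos (h.1 _) (h.1 _)
  have h1 : M m ^ k ≤ ((M (m+1)/M m) ^ m) ^ k := pow_le_pow_left₀ hm.le (lc_g1 h m) k
  calc M m ^ (m+k) = M m ^ m * M m ^ k := by rw [pow_add]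
  _ ≤ M m ^ m * ((M (m+1)/M m) ^ m) ^ k := by
      apply mul_le_mul_of_nonneg_left h1 (pow_nonneg hm.le m)
  _ = (M m * (M (m+1)/M m) ^ k) ^ m := by rw [mul_pow, ← pow_mul, ← pow_mul, Nat.mul_comm k m]
  _ ≤ M (m+k) ^ m := pow_le_pow_left₀ (by positivity) (lc_up h m k) m

/-- Reconstruction: the sup defining `ω_M` is attained. -/
private lemma lc_recon (h : IsLC M) (p : ℕ) :
    ∃ t : ℝ, 0 < t ∧ ∀ j, t ^ j * M p ≤ t ^ p * M j := by
  cases p with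
  | zero =>
    exact ⟨1, one_pos, fun j => by simpa [h.2.1] using lc_one_le h j⟩
  | succ m =>
    refine ⟨M (m+1)/M m, div_pos (h.1 _) (h.1 _), fun j => ?_⟩
    set t := M (m+1)/M m with ht
    have ht0 : 0 < t := div_pos (h.1 _) (h.1 _)
    rcases le_or_gt j (m+1) with hj | hj
    · -- j ≤ m+1 : show M (m+1) ≤ t ^ (m+1-j) * M j  then multiply
      have key : M (m+1) ≤ t ^ (m+1-j) * M j := by
        cases j with
        | zero =>
          rw [h.2.1, Nat.sub_zero, mul_one]
          exact lc_g1' h m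
        | succ i =>
          have hik : i + (m - i) = m := by omega
          have := lc_down h i (m - i)
          rw [hik] at this
          simpa [show m + 1 - (i+1) = m - i by omega, mul_comm] using this
      calc t ^ j * M (m+1) ≤ t ^ j * (t ^ (m+1-j) * M j) := by
            apply mul_le_mul_of_nonneg_left key (pow_nonneg ht0.le j)
      _ = t ^ (m+1) * M j := by rw [← mul_assoc, ← pow_add, Nat.add_sub_cancel' hj]
    · -- j > m+1
      obtain ⟨k, rfl⟩ : ∃ k, j = (m+1) + k := ⟨j - (m+1), by omega⟩
      have key : M (m+1) * t ^ k ≤ M (m+1+k) := by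
        have h1 : t ≤ M (m+2)/M (m+1) := lc_q_mono h (by omega)
        have h2 : M (m+1) * t ^ k ≤ M (m+1) * (M (m+2)/M (m+1)) ^ k := by
          apply mul_le_mul_of_nonneg_left (pow_le_pow_left₀ ht0.le h1 k) (h.1 _).le
        exact h2.trans (lc_up h (m+1) k)
      calc t ^ (m+1+k) * M (m+1) = t ^ (m+1) * (M (m+1) * t ^ k) := by rw [pow_add]; ring
      _ ≤ t ^ (m+1) * M (m+1+k) := by
          apply mul_le_mul_of_nonneg_left key (pow_nonneg ht0.le _)

/-- Boundedness of the family defining `ω_M`. -/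
private lemma lc_bdd (h : IsLC M) {t : ℝ} (ht : 0 ≤ t) :
    BddAbove (Set.range fun p : ℕ => Real.log (t ^ p / M p)) := by
  obtain ⟨P, hP⟩ := (Filter.tendsto_atTop.mp h.2.2.2.2 (t+1)).exists_forall_of_atTop
  refine BddAbove.mono ?_ (BddAbove.union
    (((Set.finite_Iio (P+1)).image (fun p : ℕ => Real.log (t ^ p / M p))).bddAbove)
    (bddAbove_Iic (a := (0:ℝ))))
  rintro x ⟨p, rfl⟩
  rcases le_or_gt p P with hp | hp
  · exact Set.mem_union_left _ ⟨p, Set.mem_Iio.mpr (by omega), rfl⟩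
  · refine Set.mem_union_right _ ?_
    have hp0 : p ≠ 0 := by omega
    have h1 : t + 1 ≤ M p ^ ((p:ℝ)⁻¹) := hP p (by omega)
    have h2 : (t+1) ^ p ≤ (M p ^ ((p:ℝ)⁻¹)) ^ p := pow_le_pow_left₀ (by linarith) h1 p
    rw [Real.rpow_inv_natCast_pow (h.1 p).le hp0] at h2
    have h3 : t ^ p ≤ M p := le_trans (pow_le_pow_left₀ ht (by linarith) p) h2
    exact Real.log_nonpos (div_nonneg (pow_nonneg ht p) (h.1 p).le) ((div_le_one (h.1 p)).2 h3)

private lemma omega_term_le (h : BddAbove (Set.range fun p : ℕ => Real.log (t ^ p / N p)))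
    (p : ℕ) : Real.log (t ^ p / N p) ≤ omegaM N t := le_ciSup h p

private lemma omega_nonneg_s2 {t : ℝ} (hN0 : N 0 = 1)
    (h : BddAbove (Set.range fun p : ℕ => Real.log (t ^ p / N p))) : 0 ≤ omegaM N t := by
  have := le_ciSup h 0
  simp [hN0] at this; exact this

private lemma omega_zero (hN0 : N 0 = 1) : omegaM N 0 = 0 := by
  have : (fun p : ℕ => Real.log ((0:ℝ) ^ p / N p)) = fun _ => (0:ℝ) := by
    funext p
    cases p with
    | zero => simp [hN0]
    | succ n => simp [zero_pow (Nat.succ_ne_zero n)]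
  rw [omegaM, this, ciSup_const]

private lemma omega_mono (h : IsLC N) {s t : ℝ} (hs : 0 ≤ s) (hst : s ≤ t) :
    omegaM N s ≤ omegaM N t := by
  have ht : 0 ≤ t := hs.trans hst
  have hbt := lc_bdd h ht
  apply ciSup_le
  intro p
  rcases eq_or_lt_of_le hs with h0 | h0
  · rcases Nat.eq_zero_or_pos p with rfl | hp
    · simpa [h.2.1] using omega_nonneg_s2 h.2.1 hbt
    · rw [← h0, zero_pow (by omega), zero_div, Real.log_zero]
      exact omega_nonneg_s2 h.2.1 hbt
  · refine le_trans (Real.log_le_log (div_pos (pow_pos h0 p) (h.1 p)) ?_) (le_ciSup hbt p)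
    have hNp := h.1 p
    gcongr

private lemma tilde_pos (h : IsLC M) (a p : ℕ) : 0 < tildeSeq M a p :=
  Real.rpow_pos_of_pos (h.1 _) _

private lemma tilde_zero' (h : IsLC M) (a : ℕ) : tildeSeq M a 0 = 1 := by
  simp [tildeSeq, h.2.1]

private lemma tilde_log (h : IsLC M) {a : ℕ} (ha : 0 < a) {t : ℝ} (ht : 0 < t) (p : ℕ) :
    Real.log (t ^ p / tildeSeq M a p)
      = (a : ℝ)⁻¹ * Real.log (t ^ (a * p) / M (a * p)) := by
  rw [Real.log_div (pow_ne_zero _ ht.ne') (tilde_pos h a p).ne',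
    Real.log_div (pow_ne_zero _ ht.ne') (h.1 _).ne', Real.log_pow, Real.log_pow,
    tildeSeq, Real.log_rpow (h.1 _)]
  have ha' : (a : ℝ) ≠ 0 := Nat.cast_ne_zero.mpr ha.ne'
  push_cast
  field_simp

private lemma tilde_bdd (h : IsLC M) {a : ℕ} (ha : 0 < a) {t : ℝ} (ht : 0 ≤ t) :
    BddAbove (Set.range fun p : ℕ => Real.log (t ^ p / tildeSeq M a p)) := by
  rcases eq_or_lt_of_le ht with h0 | h0
  · refine BddAbove.mono ?_ (bddAbove_Iic (a := (0:ℝ)))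
    rintro x ⟨p, rfl⟩
    show Real.log (t ^ p / tildeSeq M a p) ≤ 0
    rcases Nat.eq_zero_or_pos p with rfl | hp
    · simp [tilde_zero' h a]
    · rw [← h0, zero_pow (Nat.pos_iff_ne_zero.mp hp), zero_div, Real.log_zero]
  · obtain ⟨C, hC⟩ := lc_bdd h ht
    refine ⟨(a:ℝ)⁻¹ * C, ?_⟩
    rintro x ⟨p, rfl⟩
    show Real.log (t ^ p / tildeSeq M a p) ≤ (a:ℝ)⁻¹ * C
    rw [tilde_log h ha h0]
    exact mul_le_mul_of_nonneg_left (hC ⟨a * p, rfl⟩) (by positivity)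

private lemma tilde_omega_le (h : IsLC M) {a : ℕ} (ha : 0 < a) {t : ℝ} (ht : 0 ≤ t) :
    omegaM (tildeSeq M a) t ≤ (a : ℝ)⁻¹ * omegaM M t := by
  have hbM := lc_bdd h ht
  have hnn : 0 ≤ omegaM M t := omega_nonneg_s2 h.2.1 hbM
  apply ciSup_le
  intro p
  rcases eq_or_lt_of_le ht with h0 | h0
  · rcases Nat.eq_zero_or_pos p with rfl | hp
    · rw [← h0]
      rw [pow_zero, tilde_zero' h a, div_one, Real.log_one]
      rw [← h0] at hnn
      exact mul_nonneg (by positivity) hnn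
    · rw [← h0, zero_pow (Nat.pos_iff_ne_zero.mp hp), zero_div, Real.log_zero]
      rw [← h0] at hnn
      exact mul_nonneg (by positivity) hnn
  · rw [tilde_log h ha h0]
    exact mul_le_mul_of_nonneg_left (le_ciSup hbM (a * p)) (by positivity)

/-- Key inequality: `ω_M(t) ≤ 2a·ω_{M̃ᵃ}(t) + 2·log M_a`. -/
private lemma kern (h : IsLC M) {a : ℕ} (ha : 0 < a) {t : ℝ} (ht : 0 ≤ t) :
    omegaM M t ≤ 2 * (a : ℝ) * omegaM (tildeSeq M a) t + 2 * Real.log (M a) := by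
  have hbT := tilde_bdd h ha ht
  have homega : 0 ≤ omegaM (tildeSeq M a) t := omega_nonneg_s2 (tilde_zero' h a) hbT
  have hLa : 0 ≤ Real.log (M a) := Real.log_nonneg (lc_one_le h a)
  apply ciSup_le
  intro q
  by_cases hq : t ^ q ≤ M q
  · have h1 : Real.log (t ^ q / M q) ≤ 0 :=
      Real.log_nonpos (div_nonneg (pow_nonneg ht q) (h.1 q).le) ((div_le_one (h.1 q)).2 hq)
    have : (0:ℝ) ≤ 2 * (a:ℝ) * omegaM (tildeSeq M a) t := by positivity
    linarith
  · push_neg at hq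
    have hMq1 : (1:ℝ) ≤ M q := lc_one_le h q
    have ht1 : 1 < t := by
      by_contra hcon
      push_neg at hcon
      exact absurd (pow_le_one₀ ht hcon) (by linarith)
    have hq0 : q ≠ 0 := by
      rintro rfl
      rw [pow_zero, h.2.1] at hq
      exact lt_irrefl _ hq
    set p := max 1 (q / a) with hp
    have hp1 : 1 ≤ p := le_max_left _ _
    have ht0 : (0:ℝ) < t := by linarith
    -- multiplicative key inequality
    have key : t ^ q * M (a*p) ^ 2 ≤ t ^ (2*(a*p)) * M q * M a ^ 2 := by
      have hMa1 : (1:ℝ) ≤ M a ^ 2 := by nlinarith [lc_one_le h a]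
      rcases lt_or_ge q a with hqa | hqa
      · have hpe : p = 1 := by
          rw [hp, Nat.div_eq_of_lt hqa]; simp
        rw [hpe, Nat.mul_one]
        have h1 : t ^ q ≤ t ^ (2*a) := pow_le_pow_right₀ ht1.le (by omega)
        have h2 : t ^ q * M a ^ 2 ≤ t ^ (2*a) * M a ^ 2 :=
          mul_le_mul_of_nonneg_right h1 (by positivity)
        refine h2.trans ?_
        have : t ^ (2*a) * M a ^ 2 ≤ (t ^ (2*a) * M q) * M a ^ 2 := by
          have : t ^ (2*a) ≤ t ^ (2*a) * M q :=
            le_mul_of_one_le_right (pow_nonneg ht0.le _) hMq1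
          exact mul_le_mul_of_nonneg_right this (by positivity)
        linarith
      · have hpe : p = q / a := by
          rw [hp, Nat.max_eq_right (Nat.one_le_div_iff ha |>.2 hqa)]
        have hap : a * p ≤ q := by
          rw [hpe]; exact Nat.mul_div_le q a
        have h2ap : q ≤ 2*(a*p) := by
          have h1 := Nat.div_add_mod q a
          have h2 : q % a < a := Nat.mod_lt q ha
          have h3 : 1 ≤ q / a := Nat.one_le_div_iff ha |>.2 hqa
          rw [hpe]
          nlinarith [h1, h2, h3]
        set k := 2*(a*p) - q with hk
        have hqk : q + k = 2*(a*p) := by omega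
        have hMle : M (a*p) ^ 2 ≤ t ^ k * M q := by
          have hstep : (M (a*p) ^ 2) ^ q ≤ (t ^ k * M q) ^ q := by
            calc (M (a*p) ^ 2) ^ q = (M (a*p) ^ q) ^ 2 := by ring
            _ ≤ (M q ^ (a*p)) ^ 2 :=
                pow_le_pow_left₀ (pow_nonneg (h.1 _).le q) (lc_pow_le h hap) 2
            _ = M q ^ q * M q ^ k := by
                rw [← pow_mul, ← pow_add]
                congr 1
                omega
            _ ≤ M q ^ q * (t ^ q) ^ k :=
                mul_le_mul_of_nonneg_left
                  (pow_le_pow_left₀ (h.1 q).le hq.le k) (by positivity)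
            _ = (t ^ k * M q) ^ q := by ring
          exact le_of_pow_le_pow_left₀ hq0 (by positivity) hstep
        calc t ^ q * M (a*p) ^ 2 ≤ t ^ q * (t ^ k * M q) :=
              mul_le_mul_of_nonneg_left hMle (by positivity)
        _ = t ^ (2*(a*p)) * M q := by rw [← hqk, pow_add]; ring
        _ ≤ t ^ (2*(a*p)) * M q * M a ^ 2 :=
              le_mul_of_one_le_right (mul_nonneg (by positivity) (h.1 q).le) hMa1
    -- logarithmic step
    have hrw := tilde_log h ha ht0 p
    have hterm : (a:ℝ)⁻¹ * Real.log (t ^ (a*p) / M (a*p)) ≤ omegaM (tildeSeq M a) t := by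
      rw [← hrw]; exact le_ciSup hbT p
    have hkey' : Real.log (t ^ q * M (a*p) ^ 2) ≤ Real.log (t ^ (2*(a*p)) * M q * M a ^ 2) :=
      Real.log_le_log (mul_pos (pow_pos ht0 q) (pow_pos (h.1 _) 2)) key
    have e1 : Real.log (t ^ q * M (a*p) ^ 2)
        = (q:ℝ) * Real.log t + 2 * Real.log (M (a*p)) := by
      rw [Real.log_mul (pow_ne_zero q ht0.ne') (pow_ne_zero 2 (h.1 _).ne'),
        Real.log_pow, Real.log_pow]
      push_cast; ring
    have e2 : Real.log (t ^ (2*(a*p)) * M q * M a ^ 2)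
        = (2*(a*p) : ℕ) * Real.log t + Real.log (M q) + 2 * Real.log (M a) := by
      rw [Real.log_mul (mul_ne_zero (pow_ne_zero _ ht0.ne') (h.1 q).ne')
          (pow_ne_zero 2 (h.1 _).ne'),
        Real.log_mul (pow_ne_zero _ ht0.ne') (h.1 q).ne', Real.log_pow, Real.log_pow]
      push_cast; ring
    rw [e1, e2] at hkey'
    rw [Real.log_div (pow_ne_zero q ht0.ne') (h.1 q).ne', Real.log_pow]
    have hexp : Real.log (t ^ (a*p) / M (a*p))
        = (a*p : ℕ) * Real.log t - Real.log (M (a*p)) := by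
      rw [Real.log_div (pow_ne_zero _ ht0.ne') (h.1 _).ne', Real.log_pow]
    have hfin : 2 * (a:ℝ) * ((a:ℝ)⁻¹ * Real.log (t ^ (a*p) / M (a*p)))
        ≤ 2 * (a:ℝ) * omegaM (tildeSeq M a) t :=
      mul_le_mul_of_nonneg_left hterm (by positivity)
    have ha' : (a : ℝ) ≠ 0 := Nat.cast_ne_zero.mpr ha.ne'
    have hsimp : 2 * (a:ℝ) * ((a:ℝ)⁻¹ * Real.log (t ^ (a*p) / M (a*p)))
        = 2 * Real.log (t ^ (a*p) / M (a*p)) := by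
      field_simp
    rw [hsimp, hexp] at hfin
    push_cast at hkey' hfin ⊢
    linarith

end Helpers

/-- Condition (i) of Proposition `technlemma2` for the parameter `a`. -/
def S2P1 (M L : ℕ → ℝ) (a : ℕ) : Prop :=
  ∃ B : ℝ, 1 ≤ B ∧ ∀ t : ℝ, 0 ≤ t →
    omegaM L t + omegaM (tildeSeq M a) t ≤ omegaM L (B * t) + B

/-- Condition (ii) of Proposition `technlemma2` for the parameter `a`. -/
def S2P2 (M L : ℕ → ℝ) (a : ℕ) : Prop :=
  ∃ C : ℝ, 1 ≤ C ∧ ∀ t : ℝ, 0 ≤ t →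
    omegaM M t ≤ (a : ℝ) * (omegaM L (C * t) - omegaM L t) + C

/-- Condition (iii) of Proposition `technlemma2` for the parameter `a`. -/
def S2P3 (M L : ℕ → ℝ) (a : ℕ) : Prop :=
  ∃ H : ℝ, 1 ≤ H ∧ ∀ p q : ℕ, q ≤ p →
    L p ≤ H ^ p * L q * (M (a * (p - q))) ^ ((a : ℝ)⁻¹)


section Mains

variable {M L : ℕ → ℝ}

private lemma p3_to_p1 (hM : IsLC M) (hL : IsLC L) {a : ℕ} (ha : 0 < a) :
    S2P3 M L a → S2P1 M L a := by
  rintro ⟨H, hH1, hHle⟩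
  refine ⟨H, hH1, fun t ht => ?_⟩
  rcases eq_or_lt_of_le ht with h0 | htpos
  · rw [← h0, mul_zero, omega_zero hL.2.1, omega_zero (tilde_zero' hM a)]
    linarith
  · have hHt : (0:ℝ) ≤ H * t := by positivity
    have hbLH := lc_bdd hL hHt
    have key : ∀ q r : ℕ, Real.log (t ^ q / L q) + Real.log (t ^ r / tildeSeq M a r)
        ≤ omegaM L (H * t) := by
      intro q r
      have h3 := hHle (q + r) q (Nat.le_add_right q r)
      rw [Nat.add_sub_cancel_left] at h3
      have hT : tildeSeq M a r = M (a * r) ^ ((a:ℝ)⁻¹) := rfl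
      rw [← hT] at h3
      have hTpos := tilde_pos hM a r
      have hterm : Real.log (t ^ q / L q) + Real.log (t ^ r / tildeSeq M a r)
          = Real.log (t ^ (q+r) / (L q * tildeSeq M a r)) := by
        rw [← Real.log_mul (div_ne_zero (pow_ne_zero _ htpos.ne') (hL.1 q).ne')
          (div_ne_zero (pow_ne_zero _ htpos.ne') hTpos.ne')]
        congr 1
        rw [pow_add]
        field_simp
      rw [hterm]
      have hdiv : t ^ (q+r) / (L q * tildeSeq M a r) ≤ (H*t) ^ (q+r) / L (q+r) := by
        rw [div_le_div_iff₀ (mul_pos (hL.1 q) hTpos) (hL.1 _)]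
        calc t ^ (q+r) * L (q+r) ≤ t ^ (q+r) * (H ^ (q+r) * L q * tildeSeq M a r) :=
              mul_le_mul_of_nonneg_left h3 (pow_nonneg htpos.le _)
        _ = (H*t) ^ (q+r) * (L q * tildeSeq M a r) := by rw [mul_pow]; ring
      exact le_trans
        (Real.log_le_log (div_pos (pow_pos htpos _) (mul_pos (hL.1 q) hTpos)) hdiv)
        (le_ciSup hbLH (q+r))
    have hA : omegaM L t ≤ omegaM L (H*t) - omegaM (tildeSeq M a) t := by
      apply ciSup_le
      intro q
      rw [le_sub_iff_add_le, add_comm]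
      have : omegaM (tildeSeq M a) t ≤ omegaM L (H*t) - Real.log (t ^ q / L q) := by
        apply ciSup_le
        intro r
        have := key q r
        linarith
      linarith
    linarith

private lemma p1_to_p3 (hM : IsLC M) (hL : IsLC L) {a : ℕ} (ha : 0 < a) :
    S2P1 M L a → S2P3 M L a := by
  rintro ⟨B, hB1, hBle⟩
  have hB0 : (0:ℝ) < B := by linarith
  have heB : (1:ℝ) ≤ Real.exp B := by
    rw [← Real.exp_zero]
    exact Real.exp_le_exp.2 (by linarith)
  refine ⟨B * Real.exp B, by nlinarith, fun p q hqp => ?_⟩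
  rcases Nat.eq_zero_or_pos p with rfl | hp
  · have hq0 : q = 0 := Nat.le_zero.mp hqp
    subst hq0
    simp [hL.2.1, hM.2.1]
  · obtain ⟨t0, ht0, hrec⟩ := lc_recon hL p
    set s := t0 / B with hs
    have hspos : 0 < s := div_pos ht0 hB0
    have hBs : B * s = t0 := by rw [hs]; field_simp
    set r := p - q with hr
    have hqr : q + r = p := by omega
    have h1 : Real.log (s ^ q / L q) ≤ omegaM L s := le_ciSup (lc_bdd hL hspos.le) q
    have h2 : Real.log (s ^ r / tildeSeq M a r) ≤ omegaM (tildeSeq M a) s :=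
      le_ciSup (tilde_bdd hM ha hspos.le) r
    have h3 := hBle s hspos.le
    have h4 : omegaM L (B * s) ≤ Real.log (t0 ^ p / L p) := by
      rw [hBs]
      apply ciSup_le
      intro j
      apply Real.log_le_log (div_pos (pow_pos ht0 j) (hL.1 j))
      rw [div_le_div_iff₀ (hL.1 j) (hL.1 p)]
      calc t0 ^ j * L p ≤ t0 ^ p * L j := hrec j
      _ = t0 ^ p * L j := rfl
    -- expand logs
    have e1 : Real.log (s ^ q / L q) = (q:ℝ) * Real.log s - Real.log (L q) := by
      rw [Real.log_div (pow_ne_zero _ hspos.ne') (hL.1 q).ne', Real.log_pow]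
    have e2 : Real.log (s ^ r / tildeSeq M a r)
        = (r:ℝ) * Real.log s - (a:ℝ)⁻¹ * Real.log (M (a*r)) := by
      rw [tilde_log hM ha hspos r, Real.log_div (pow_ne_zero _ hspos.ne') (hM.1 _).ne',
        Real.log_pow]
      have ha' : (a:ℝ) ≠ 0 := Nat.cast_ne_zero.mpr ha.ne'
      push_cast
      field_simp
    have e3 : Real.log (t0 ^ p / L p)
        = (p:ℝ) * Real.log B + (p:ℝ) * Real.log s - Real.log (L p) := by
      rw [Real.log_div (pow_ne_zero _ ht0.ne') (hL.1 p).ne', Real.log_pow, ← hBs,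
        Real.log_mul hB0.ne' hspos.ne']
      ring
    have hcast : (q:ℝ) + (r:ℝ) = (p:ℝ) := by push_cast [← hqr]; ring
    have hlog : Real.log (L p) ≤ Real.log (L q) + (a:ℝ)⁻¹ * Real.log (M (a*r))
        + (p:ℝ) * Real.log B + B := by
      rw [e1] at h1; rw [e2] at h2; rw [e3] at h4
      have hps : (q:ℝ) * Real.log s + (r:ℝ) * Real.log s = (p:ℝ) * Real.log s := by
        rw [← add_mul, hcast]
      linarith [h1, h2, h3, h4]
    -- exponentiate
    have hexp := Real.exp_le_exp.2 hlog
    rw [Real.exp_log (hL.1 p)] at hexp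
    have hrhs : Real.exp (Real.log (L q) + (a:ℝ)⁻¹ * Real.log (M (a*r))
        + (p:ℝ) * Real.log B + B)
        = L q * M (a*r) ^ ((a:ℝ)⁻¹) * B ^ p * Real.exp B := by
      have eA : Real.exp ((a:ℝ)⁻¹ * Real.log (M (a*r))) = M (a*r) ^ ((a:ℝ)⁻¹) := by
        rw [Real.rpow_def_of_pos (hM.1 _), mul_comm]
      have eB : Real.exp ((p:ℝ) * Real.log B) = B ^ p := by
        rw [Real.exp_nat_mul, Real.exp_log hB0]
      rw [Real.exp_add, Real.exp_add, Real.exp_add, Real.exp_log (hL.1 q), eA, eB]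
    rw [hrhs] at hexp
    have hfinal : L q * M (a*r) ^ ((a:ℝ)⁻¹) * B ^ p * Real.exp B
        ≤ (B * Real.exp B) ^ p * L q * M (a * (p - q)) ^ ((a:ℝ)⁻¹) := by
      rw [← hr, mul_pow]
      have hEp : Real.exp B ≤ Real.exp B ^ p :=
        le_self_pow₀ heB (by omega)
      have hMT : (0:ℝ) ≤ M (a*r) ^ ((a:ℝ)⁻¹) := (tilde_pos hM a r).le
      calc L q * M (a*r) ^ ((a:ℝ)⁻¹) * B ^ p * Real.exp B
          ≤ L q * M (a*r) ^ ((a:ℝ)⁻¹) * B ^ p * Real.exp B ^ p := by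
            exact mul_le_mul_of_nonneg_left hEp
              (mul_nonneg (mul_nonneg (hL.1 q).le hMT) (pow_nonneg hB0.le p))
      _ = B ^ p * Real.exp B ^ p * L q * M (a*r) ^ ((a:ℝ)⁻¹) := by ring
    exact hexp.trans hfinal

private lemma p2_to_p1 (hM : IsLC M) (hL : IsLC L) {a : ℕ} (ha : 0 < a) :
    S2P2 M L a → S2P1 M L a := by
  rintro ⟨C, hC1, hCle⟩
  refine ⟨C, hC1, fun t ht => ?_⟩
  have h1 : omegaM (tildeSeq M a) t ≤ (a:ℝ)⁻¹ * omegaM M t := tilde_omega_le hM ha ht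
  have h2 := hCle t ht
  have ha1 : (1:ℝ) ≤ (a:ℝ) := by exact_mod_cast ha
  have ha' : (a:ℝ) ≠ 0 := by linarith
  have h3 : (a:ℝ)⁻¹ * omegaM M t
      ≤ (omegaM L (C*t) - omegaM L t) + (a:ℝ)⁻¹ * C := by
    have := mul_le_mul_of_nonneg_left h2 (inv_nonneg.2 (by linarith : (0:ℝ) ≤ a))
    calc (a:ℝ)⁻¹ * omegaM M t
        ≤ (a:ℝ)⁻¹ * ((a:ℝ) * (omegaM L (C*t) - omegaM L t) + C) := this
    _ = (omegaM L (C*t) - omegaM L t) + (a:ℝ)⁻¹ * C := by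
        field_simp
  have h4 : (a:ℝ)⁻¹ * C ≤ C := by
    have hinv : (a:ℝ)⁻¹ ≤ 1 := by
      rw [inv_le_one_iff₀]; right; exact ha1
    nlinarith
  linarith

private lemma p1_to_p2 (hM : IsLC M) (hL : IsLC L) {a : ℕ} (ha : 0 < a) :
    S2P1 M L a → S2P2 M L (2 * a) := by
  rintro ⟨B, hB1, hBle⟩
  have hLa : 0 ≤ Real.log (M a) := Real.log_nonneg (lc_one_le hM a)
  have ha1 : (1:ℝ) ≤ (a:ℝ) := by exact_mod_cast ha
  refine ⟨2*(a:ℝ)*B + 2*Real.log (M a) + B, by nlinarith, fun t ht => ?_⟩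
  set C := 2*(a:ℝ)*B + 2*Real.log (M a) + B with hC
  have hBC : B ≤ C := by rw [hC]; nlinarith
  have hk := kern hM ha ht
  have hB' := hBle t ht
  have hmono : omegaM L (B*t) ≤ omegaM L (C*t) :=
    omega_mono hL (by positivity) (mul_le_mul_of_nonneg_right hBC ht)
  have h5 : 2*(a:ℝ) * omegaM (tildeSeq M a) t
      ≤ 2*(a:ℝ) * (omegaM L (B*t) + B - omegaM L t) :=
    mul_le_mul_of_nonneg_left (by linarith) (by positivity)
  have hgoal : omegaM M t ≤ 2*(a:ℝ) * (omegaM L (C*t) - omegaM L t) + C := by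
    nlinarith [hk, h5, hmono]
  calc omegaM M t ≤ 2*(a:ℝ) * (omegaM L (C*t) - omegaM L t) + C := hgoal
  _ = ((2*a : ℕ):ℝ) * (omegaM L (C*t) - omegaM L t) + C := by push_cast; ring

end Mains

theorem stmt2 (M L : ℕ → ℝ) (hM : IsLC M) (hL : IsLC L) :
    (((∃ a : ℕ, 0 < a ∧ S2P1 M L a) ↔ (∃ a : ℕ, 0 < a ∧ S2P2 M L a)) ∧
     ((∃ a : ℕ, 0 < a ∧ S2P1 M L a) ↔ (∃ a : ℕ, 0 < a ∧ S2P3 M L a))) ∧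
    (∀ a : ℕ, 0 < a → (S2P1 M L a ↔ S2P3 M L a)) ∧
    (∀ a : ℕ, 0 < a → S2P1 M L a → S2P2 M L (2 * a)) ∧
    (∀ a : ℕ, 0 < a → S2P2 M L a → S2P1 M L a) := by
  refine ⟨⟨⟨?_, ?_⟩, ⟨?_, ?_⟩⟩, fun a ha => ⟨p1_to_p3 hM hL ha, p3_to_p1 hM hL ha⟩,
    fun a ha => p1_to_p2 hM hL ha, fun a ha => p2_to_p1 hM hL ha⟩
  · rintro ⟨a, ha, h⟩
    exact ⟨2*a, by omega, p1_to_p2 hM hL ha h⟩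
  · rintro ⟨a, ha, h⟩
    exact ⟨a, ha, p2_to_p1 hM hL ha h⟩
  · rintro ⟨a, ha, h⟩
    exact ⟨a, ha, p1_to_p3 hM hL ha h⟩
  · rintro ⟨a, ha, h⟩
    exact ⟨a, ha, p3_to_p1 hM hL ha h⟩
end

section
/- Let M belong to the class LC. Then the following are equivalent: (i) there exist a ∈ ℕ_{>0} and C ≥ 1 such that ω_M(t) ≤ a·(ω_M(Ct) − ω_M(t)) + C for all t ≥ 0; (ii) ω_M satisfies (ω₆); (iii) M has moderate growth (mg). -/
open Real Filter Set

/-! The quotients `μ_p = M_p / M_{p-1}` increase, so at `t = μ_n` the supremum defining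
`ω_M(t)` is attained at `p = n`: `M_n e^{ω_M(μ_n)} = μ_n^n`. Evaluating `(ω₆)` at
`t = μ_{p+q} / H` and using `t^p ≤ M_p e^{ω_M(t)}` for `p` and for `q` gives
`M_{p+q} ≤ e^H H^{p+q} M_p M_q`. Conversely, moderate growth bounds `t^{2p}` by
`e^C M_p^2 e^{ω_M(Ct)}`, which is `(ω₆)`. Finally `(i)` reads `ω(t) ≤ θ ω(Ct) + C` with
`θ = a/(a+1) < 1`; iterating it `k` times with `θ^k < 1/2` gives `(ω₆)`. -/

def ModerateGrowth (M : ℕ → ℝ) : Prop :=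
  ∃ C : ℝ, 1 ≤ C ∧ ∀ p q : ℕ, M (p + q) ≤ C ^ (p + q + 1) * M p * M q

lemma le_pow_mul_add_of_le_mul_add {ω : ℝ → ℝ} {θ C c : ℝ} (hθ₀ : 0 ≤ θ) (hθ₁ : θ ≤ 1)
    (hC : 0 ≤ C) (hc : 0 ≤ c) (h : ∀ t, 0 ≤ t → ω t ≤ θ * ω (C * t) + c) (k : ℕ) {t : ℝ}
    (ht : 0 ≤ t) : ω t ≤ θ ^ k * ω (C ^ k * t) + k * c := by
  induction k with
  | zero => simp
  | succ k ih =>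
    have hstep := h (C ^ k * t) (by positivity)
    rw [← mul_assoc, ← pow_succ'] at hstep
    have hθk : θ ^ k * c ≤ c := mul_le_of_le_one_left hc (pow_le_one₀ hθ₀ hθ₁)
    calc ω t ≤ θ ^ k * (θ * ω (C ^ (k + 1) * t) + c) + k * c :=
          ih.trans (add_le_add_left (mul_le_mul_of_nonneg_left hstep (pow_nonneg hθ₀ k)) _)
      _ = θ ^ (k + 1) * ω (C ^ (k + 1) * t) + (θ ^ k * c + k * c) := by ring
      _ ≤ θ ^ (k + 1) * ω (C ^ (k + 1) * t) + ↑(k + 1) * c := by push_cast; linarith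

theorem omega6_of_le_mul_sub_add {ω : ℝ → ℝ} (hmono : MonotoneOn ω (Ici 0))
    (hnonneg : ∀ t, 0 ≤ t → 0 ≤ ω t) {a C : ℝ} (ha : 0 ≤ a) (hC : 1 ≤ C)
    (h : ∀ t, 0 ≤ t → ω t ≤ a * (ω (C * t) - ω t) + C) : Omega6 ω := by
  set θ := a / (a + 1)
  have hθ₀ : 0 ≤ θ := by positivity
  have hθ₁ : θ < 1 := (div_lt_one (by linarith)).mpr (by linarith)
  have hcontr : ∀ t, 0 ≤ t → ω t ≤ θ * ω (C * t) + C := by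
    intro t ht
    have hstep : ω t ≤ θ * ω (C * t) + C / (a + 1) := by
      rw [div_mul_eq_mul_div, ← add_div, le_div_iff₀ (by linarith)]
      linarith [h t ht]
    linarith [div_le_self (by linarith : 0 ≤ C) (by linarith : 1 ≤ a + 1)]
  obtain ⟨k, hk⟩ := exists_pow_lt_of_lt_one (by norm_num : (0 : ℝ) < 1 / 2) hθ₁
  have hCk : 1 ≤ C ^ k := one_le_pow₀ hC
  have hkC : 0 ≤ 2 * k * C := by positivity
  refine ⟨C ^ k + 2 * k * C, by linarith, fun t ht => ?_⟩
  have hiter := le_pow_mul_add_of_le_mul_add hθ₀ hθ₁.le (by linarith) (by linarith) hcontr k ht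
  have hle : ω (C ^ k * t) ≤ ω ((C ^ k + 2 * k * C) * t) :=
    hmono (mem_Ici.mpr (by positivity)) (mem_Ici.mpr (by positivity))
      (mul_le_mul_of_nonneg_right (le_add_of_nonneg_right hkC) ht)
  have hhalf : θ ^ k * ω (C ^ k * t) ≤ 1 / 2 * ω (C ^ k * t) :=
    mul_le_mul_of_nonneg_right hk.le (hnonneg _ (by positivity))
  linarith

namespace IsLC

variable {M : ℕ → ℝ}

lemma seqQuot_pos (hM : IsLC M) (p : ℕ) : 0 < seqQuot M p := by
  unfold seqQuot
  split
  · exact one_pos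
  · exact div_pos (hM.1 _) (hM.1 _)

lemma mul_seqQuot_succ (hM : IsLC M) (n : ℕ) : M n * seqQuot M (n + 1) = M (n + 1) := by
  simp only [seqQuot, Nat.add_one_ne_zero, if_false, Nat.add_sub_cancel]
  exact mul_div_cancel₀ _ (hM.1 n).ne'

lemma monotone_seqQuot (hM : IsLC M) : Monotone (seqQuot M) := by
  refine monotone_nat_of_le_succ fun p => ?_
  rcases p with _ | n
  · simpa [seqQuot, hM.2.1] using hM.2.2.1
  · have hlc := hM.2.2.2.1 (n + 1) n.succ_pos
    simp only [seqQuot, Nat.add_one_ne_zero, if_false, Nat.add_sub_cancel] at hlc ⊢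
    rw [div_le_div_iff₀ (hM.1 _) (hM.1 _)]
    nlinarith

lemma le_mul_seqQuot_pow (hM : IsLC M) (j k : ℕ) : M (j + k) ≤ M j * seqQuot M (j + k) ^ k := by
  induction k with
  | zero => simp
  | succ k ih =>
    have hmono : seqQuot M (j + k) ≤ seqQuot M (j + k + 1) := hM.monotone_seqQuot (by omega)
    have hμ := hM.seqQuot_pos (j + k + 1)
    calc M (j + (k + 1)) = M (j + k) * seqQuot M (j + k + 1) := (hM.mul_seqQuot_succ _).symm
      _ ≤ M j * seqQuot M (j + k) ^ k * seqQuot M (j + k + 1) := by gcongr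
      _ ≤ M j * seqQuot M (j + k + 1) ^ k * seqQuot M (j + k + 1) := by
          have := hM.seqQuot_pos (j + k)
          have := hM.1 j
          gcongr
      _ = M j * seqQuot M (j + (k + 1)) ^ (k + 1) := by ring_nf

lemma mul_seqQuot_pow_le (hM : IsLC M) (j k : ℕ) : M j * seqQuot M j ^ k ≤ M (j + k) := by
  induction k with
  | zero => simp
  | succ k ih =>
    have hmono : seqQuot M j ≤ seqQuot M (j + k + 1) := hM.monotone_seqQuot (by omega)
    have := hM.seqQuot_pos j
    calc M j * seqQuot M j ^ (k + 1) = M j * seqQuot M j ^ k * seqQuot M j := by ring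
      _ ≤ M (j + k) * seqQuot M (j + k + 1) := by
          have := hM.1 (j + k)
          gcongr
      _ = M (j + (k + 1)) := hM.mul_seqQuot_succ _

lemma seqQuot_pow_mul_le (hM : IsLC M) (n q : ℕ) :
    seqQuot M n ^ q * M n ≤ seqQuot M n ^ n * M q := by
  have hμ := hM.seqQuot_pos n
  rcases le_total q n with h | h
  · obtain ⟨k, rfl⟩ := Nat.exists_eq_add_of_le h
    calc seqQuot M (q + k) ^ q * M (q + k)
        ≤ seqQuot M (q + k) ^ q * (M q * seqQuot M (q + k) ^ k) := by
          gcongr; exact hM.le_mul_seqQuot_pow q k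
      _ = seqQuot M (q + k) ^ (q + k) * M q := by ring
  · obtain ⟨k, rfl⟩ := Nat.exists_eq_add_of_le h
    calc seqQuot M n ^ (n + k) * M n = seqQuot M n ^ n * (M n * seqQuot M n ^ k) := by ring
      _ ≤ seqQuot M n ^ n * M (n + k) := by gcongr; exact hM.mul_seqQuot_pow_le n k

lemma bddAbove_range_log (hM : IsLC M) {t : ℝ} (ht : 0 ≤ t) :
    BddAbove (range fun p : ℕ => log (t ^ p / M p)) := by
  have hev : ∀ᶠ p : ℕ in atTop, log (t ^ p / M p) ≤ 0 := by
    filter_upwards [hM.2.2.2.2.eventually_ge_atTop (t + 1), eventually_ge_atTop 1] with p hp hp1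
    have hroot : (t + 1) ^ p ≤ M p := by
      simpa only [rpow_inv_natCast_pow (hM.1 p).le (by omega : p ≠ 0)] using
        pow_le_pow_left₀ (by linarith) hp p
    refine log_nonpos (div_nonneg (pow_nonneg ht p) (hM.1 p).le) ((div_le_one (hM.1 p)).mpr ?_)
    exact (pow_le_pow_left₀ ht (by linarith) p).trans hroot
  exact IsBoundedUnder.bddAbove_range ⟨0, eventually_map.mpr hev⟩

lemma log_le_omegaM (hM : IsLC M) {t : ℝ} (ht : 0 ≤ t) (p : ℕ) :
    log (t ^ p / M p) ≤ omegaM M t :=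
  le_ciSup (hM.bddAbove_range_log ht) p

lemma omegaM_le_iff (hM : IsLC M) {t : ℝ} (ht : 0 < t) {x : ℝ} :
    omegaM M t ≤ x ↔ ∀ p, t ^ p ≤ M p * exp x := by
  refine (ciSup_le_iff (hM.bddAbove_range_log ht.le)).trans (forall_congr' fun p => ?_)
  rw [log_le_iff_le_exp (by have := hM.1 p; positivity), div_le_iff₀ (hM.1 p), mul_comm]

lemma omegaM_nonneg (hM : IsLC M) {t : ℝ} (ht : 0 ≤ t) : 0 ≤ omegaM M t := by
  simpa [hM.2.1] using hM.log_le_omegaM ht 0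

lemma omegaM_zero (hM : IsLC M) : omegaM M 0 = 0 := by
  refine le_antisymm (ciSup_le fun p => ?_) (hM.omegaM_nonneg le_rfl)
  rcases p with _ | p <;> simp [hM.2.1]

lemma monotoneOn_omegaM (hM : IsLC M) : MonotoneOn (omegaM M) (Ici 0) := by
  intro s hs t ht hst
  rcases (mem_Ici.mp hs).eq_or_lt with rfl | hs₀
  · rw [hM.omegaM_zero]
    exact hM.omegaM_nonneg ht
  · refine (hM.omegaM_le_iff hs₀).mpr fun p => ?_
    exact (pow_le_pow_left₀ hs₀.le hst p).trans
      ((hM.omegaM_le_iff (hs₀.trans_le hst)).mp le_rfl p)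

lemma omegaM_seqQuot (hM : IsLC M) (n : ℕ) :
    omegaM M (seqQuot M n) = log (seqQuot M n ^ n / M n) := by
  have hμ := hM.seqQuot_pos n
  refine le_antisymm ((hM.omegaM_le_iff hμ).mpr fun q => ?_) (hM.log_le_omegaM hμ.le n)
  rw [exp_log (by have := hM.1 n; positivity), mul_div_assoc', le_div_iff₀ (hM.1 n), mul_comm (M q)]
  exact hM.seqQuot_pow_mul_le n q

theorem moderateGrowth_of_omega6 (hM : IsLC M) (h : Omega6 (omegaM M)) : ModerateGrowth M := by
  obtain ⟨H, hH, h6⟩ := h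
  have hHexp : H ≤ exp H := by linarith [add_one_le_exp H]
  refine ⟨exp H, by linarith, fun p q => ?_⟩
  set μ := seqQuot M (p + q)
  have hμ : 0 < μ := hM.seqQuot_pos _
  set s := μ / H
  have hs : 0 < s := by positivity
  have hHs : H * s = μ := mul_div_cancel₀ _ (by positivity)
  have hpeak : M (p + q) * exp (omegaM M μ) = μ ^ (p + q) := by
    rw [hM.omegaM_seqQuot, exp_log (by have := hM.1 (p + q); positivity),
      mul_div_cancel₀ _ (hM.1 _).ne']
  have h6s : 2 * omegaM M s ≤ omegaM M μ + H := hHs ▸ h6 s hs.le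
  have hps := (hM.omegaM_le_iff hs).mp le_rfl p
  have hqs := (hM.omegaM_le_iff hs).mp le_rfl q
  have key : M (p + q) * exp (2 * omegaM M s) ≤
      exp H * H ^ (p + q) * M p * M q * exp (2 * omegaM M s) :=
    calc M (p + q) * exp (2 * omegaM M s)
        ≤ M (p + q) * exp (omegaM M μ + H) := by have := hM.1 (p + q); gcongr
      _ = exp H * H ^ (p + q) * (s ^ p * s ^ q) := by
          rw [exp_add, ← mul_assoc, hpeak, ← hHs]; ring
      _ ≤ exp H * H ^ (p + q) * ((M p * exp (omegaM M s)) * (M q * exp (omegaM M s))) := by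
          have := hM.1 p
          gcongr
      _ = exp H * H ^ (p + q) * M p * M q * exp (2 * omegaM M s) := by
          rw [two_mul, exp_add]; ring
  calc M (p + q) ≤ exp H * H ^ (p + q) * M p * M q := le_of_mul_le_mul_right key (exp_pos _)
    _ ≤ exp H * exp H ^ (p + q) * M p * M q := by
        have := hM.1 p; have := hM.1 q; gcongr
    _ = exp H ^ (p + q + 1) * M p * M q := by ring

theorem omega6_of_moderateGrowth (hM : IsLC M) (h : ModerateGrowth M) : Omega6 (omegaM M) := by
  obtain ⟨C, hC, hmg⟩ := h
  have hC₀ : 0 < C := by linarith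
  refine ⟨C, hC, fun t ht => ?_⟩
  rcases ht.eq_or_lt with rfl | ht₀
  · rw [mul_zero, hM.omegaM_zero]
    linarith
  suffices omegaM M t ≤ (omegaM M (C * t) + C) / 2 by linarith
  refine (hM.omegaM_le_iff ht₀).mpr fun p => ?_
  have hMp := hM.1 p
  have hCt := (hM.omegaM_le_iff (by positivity : 0 < C * t)).mp le_rfl (2 * p)
  have hsq :
      C ^ (2 * p) * (t ^ p) ^ 2 ≤ C ^ (2 * p) * (M p * exp ((omegaM M (C * t) + C) / 2)) ^ 2 :=
    calc C ^ (2 * p) * (t ^ p) ^ 2 = (C * t) ^ (2 * p) := by ring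
      _ ≤ M (2 * p) * exp (omegaM M (C * t)) := hCt
      _ ≤ C ^ (2 * p + 1) * M p * M p * exp (omegaM M (C * t)) := by
          gcongr; simpa only [two_mul] using hmg p p
      _ ≤ C ^ (2 * p) * exp C * M p * M p * exp (omegaM M (C * t)) := by
          rw [pow_succ]; gcongr; linarith [add_one_le_exp C]
      _ = C ^ (2 * p) * (M p * exp ((omegaM M (C * t) + C) / 2)) ^ 2 := by
          rw [mul_pow, ← exp_nat_mul]; push_cast; rw [mul_div_cancel₀ _ two_ne_zero, exp_add]; ring
  exact (pow_le_pow_iff_left₀ (by positivity) (by positivity) two_ne_zero).mp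
    (le_of_mul_le_mul_left hsq (by positivity))

end IsLC

theorem stmt3 (M : ℕ → ℝ) (hM : IsLC M) :
    ((∃ a : ℕ, 0 < a ∧ ∃ C : ℝ, 1 ≤ C ∧ ∀ t : ℝ, 0 ≤ t →
        omegaM M t ≤ (a : ℝ) * (omegaM M (C * t) - omegaM M t) + C) ↔
      Omega6 (omegaM M)) ∧
    (Omega6 (omegaM M) ↔
      ∃ C : ℝ, 1 ≤ C ∧ ∀ p q : ℕ, M (p + q) ≤ C ^ (p + q + 1) * M p * M q) := by
  refine ⟨⟨?_, ?_⟩, hM.moderateGrowth_of_omega6, hM.omega6_of_moderateGrowth⟩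
  · rintro ⟨a, -, C, hC, h⟩
    exact omega6_of_le_mul_sub_add hM.monotoneOn_omegaM (fun _ => hM.omegaM_nonneg) a.cast_nonneg
      hC h
  · rintro ⟨H, hH, h6⟩
    exact ⟨1, one_pos, H, hH, fun t ht => by push_cast; linarith [h6 t ht]⟩
end

section
/- Let M and L belong to the class LC, let λ denote the quotient sequence of L, and for a ∈ ℕ_{>0} let μ̃^{2a} denote the quotient sequence of M̃^{2a}. Consider the assertions: (i) ∃ a ∈ ℕ_{>0} ∃ A ≥ 1 ∀ p ≥ 1: λ_p ≤ A·(M_{ap})^{1/(ap)}; (ii) ∃ a ∈ ℕ_{>0} ∃ A ≥ 1 ∀ p ∈ ℕ: λ_{2p} ≤ A·μ̃^{2a}_p; (iii) ∃ a ∈ ℕ_{>0} ∃ A ≥ 1 ∀ t ≥ 0: 2·Σ_{M̃^{2a}}(t) ≤ Σ_L(At); (iv) ∃ a ∈ ℕ_{>0} ∃ A ≥ 1 ∀ t ≥ 0: 2·ω_{M̃^{2a}}(t) ≤ ω_L(At); (v) ∃ a ∈ ℕ_{>0} ∃ A ≥ 1 ∀ p, q ∈ ℕ: L_{p+q} ≤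 A^{p+q}·M̃^{2a}_p·M̃^{2a}_q; (vi) ∃ a ∈ ℕ_{>0} ∃ A ≥ 1 ∀ p ∈ ℕ: L_{2p} ≤ A^p·(M̃^{2a}_p)². Then (i) ⇒ (ii) ⟺ (iii) ⇒ (iv) ⟺ (v) ⟺ (vi). Moreover (partial converse): if L satisfies (genmg) for some d ∈ ℕ_{>0} and there exist b ∈ ℕ_{>0} and A ≥ 1 with L_{2p} ≤ A^p·(M̃^b_p)² for all p ∈ ℕ, then (i) holds with a := db. -/
open Real Filter Set

namespace Aux

def Nice (M : ℕ → ℝ) : Prop :=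
  (∀ p, 0 < M p) ∧ M 0 = 1 ∧ Monotone (seqQuot M) ∧
    Tendsto (seqQuot M) atTop atTop

variable {M : ℕ → ℝ}

theorem seqQuot_zero (M : ℕ → ℝ) : seqQuot M 0 = 1 := rfl

theorem seqQuot_succ (M : ℕ → ℝ) (p : ℕ) : seqQuot M (p + 1) = M (p + 1) / M p := by
  simp [seqQuot]

theorem Nice.pos (h : Nice M) : ∀ p, 0 < M p := h.1

theorem Nice.one_le_quot (h : Nice M) (p : ℕ) : 1 ≤ seqQuot M p := by
  have := h.2.2.1 (Nat.zero_le p); simpa [seqQuot_zero] using this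

theorem Nice.M_succ (h : Nice M) (p : ℕ) : M (p + 1) = seqQuot M (p + 1) * M p := by
  rw [seqQuot_succ, div_mul_cancel₀]
  exact (h.pos p).ne'

theorem Nice.one_le (h : Nice M) (p : ℕ) : 1 ≤ M p := by
  induction p with
  | zero => rw [h.2.1]
  | succ n ih =>
    rw [h.M_succ n]
    calc (1:ℝ) = 1 * 1 := by ring
    _ ≤ seqQuot M (n+1) * M n := by
        exact mul_le_mul (h.one_le_quot _) ih zero_le_one (le_trans zero_le_one (h.one_le_quot _))

theorem Nice.monoM (h : Nice M) : Monotone M := by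
  apply monotone_nat_of_le_succ
  intro n
  rw [h.M_succ n]
  nth_rewrite 1 [← one_mul (M n)]
  exact mul_le_mul_of_nonneg_right (h.one_le_quot _) (h.pos n).le

theorem Nice.cross (h : Nice M) (r s : ℕ) (hrs : r ≤ s) :
    ∀ k : ℕ, M (r + k) * M s ≤ M r * M (s + k) := by
  intro k
  induction k with
  | zero => simp [mul_comm]
  | succ n ih =>
    have h1 : seqQuot M (r + n + 1) ≤ seqQuot M (s + n + 1) := by
      apply h.2.2.1; omega
    calc M (r + (n+1)) * M s = seqQuot M (r + n + 1) * (M (r + n) * M s) := by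
          rw [show r + (n+1) = (r+n)+1 by ring, h.M_succ]; ring
    _ ≤ seqQuot M (s + n + 1) * (M r * M (s + n)) := by
        apply mul_le_mul h1 ih
        · exact mul_nonneg (h.pos _).le (h.pos _).le
        · exact le_trans zero_le_one (h.one_le_quot _)
    _ = M r * M (s + (n+1)) := by
        rw [show s + (n+1) = (s+n)+1 by ring, h.M_succ]; ring

theorem Nice.sq_le (h : Nice M) (p q : ℕ) : M (p + q) ^ 2 ≤ M (2 * p) * M (2 * q) := by
  rcases le_total p q with hpq | hpq
  · have := h.cross (2*p) (p+q) (by omega) (q - p)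
    rw [show 2*p + (q-p) = p + q by omega, show p+q+(q-p) = 2*q by omega] at this
    nlinarith [h.pos (p+q)]
  · have := h.cross (2*q) (p+q) (by omega) (p - q)
    rw [show 2*q + (p-q) = p + q by omega, show p+q+(p-q) = 2*p by omega] at this
    nlinarith [h.pos (p+q)]

theorem Nice.le_pow_quot (h : Nice M) (p : ℕ) : M p ≤ (seqQuot M p) ^ p := by
  induction p with
  | zero => simp [h.2.1]
  | succ n ih =>
    have h0 : (0:ℝ) ≤ seqQuot M n := le_trans zero_le_one (h.one_le_quot _)
    have hmono : seqQuot M n ≤ seqQuot M (n+1) := h.2.2.1 (Nat.le_succ n)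
    calc M (n+1) = seqQuot M (n+1) * M n := h.M_succ n
    _ ≤ seqQuot M (n+1) * (seqQuot M n) ^ n := by
        exact mul_le_mul_of_nonneg_left ih (le_trans zero_le_one (h.one_le_quot _))
    _ ≤ seqQuot M (n+1) * (seqQuot M (n+1)) ^ n := by
        apply mul_le_mul_of_nonneg_left (pow_le_pow_left₀ h0 hmono n)
        exact le_trans zero_le_one (h.one_le_quot _)
    _ = (seqQuot M (n+1)) ^ (n+1) := by ring

theorem Nice.rpow_le_quot (h : Nice M) {p : ℕ} (hp : 1 ≤ p) :
    (M p) ^ ((p : ℝ)⁻¹) ≤ seqQuot M p := by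
  have hq : (0:ℝ) ≤ seqQuot M p := le_trans zero_le_one (h.one_le_quot _)
  have := Real.rpow_le_rpow (h.pos p).le (h.le_pow_quot p) (by positivity : (0:ℝ) ≤ (p:ℝ)⁻¹)
  calc (M p) ^ ((p : ℝ)⁻¹) ≤ ((seqQuot M p) ^ p) ^ ((p:ℝ)⁻¹) := this
  _ = seqQuot M p := by
      rw [← Real.rpow_natCast (seqQuot M p) p, ← Real.rpow_mul hq,
        mul_inv_cancel₀ (by exact_mod_cast (by omega : p ≠ 0)), Real.rpow_one]

theorem icc_of_dc {S : Set ℕ} (hfin : S.Finite) (h0 : 0 ∉ S)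
    (hdc : ∀ p ∈ S, ∀ q, 1 ≤ q → q ≤ p → q ∈ S) : S = Set.Icc 1 S.ncard := by
  rcases S.eq_empty_or_nonempty with hS | hS
  · simp [hS]
  · have hne : hfin.toFinset.Nonempty := by
      rwa [Set.Finite.toFinset_nonempty]
    set m := hfin.toFinset.max' hne with hm
    have hmS : m ∈ S := by
      have := hfin.toFinset.max'_mem hne
      rwa [Set.Finite.mem_toFinset] at this
    have hSeq : S = Set.Icc 1 m := by
      apply Set.eq_of_subset_of_subset
      · intro p hp
        constructor
        · rcases Nat.eq_zero_or_pos p with rfl | hp1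
          · exact absurd hp h0
          · exact hp1
        · exact hfin.toFinset.le_max' p (by rwa [Set.Finite.mem_toFinset])
      · intro q hq
        exact hdc m hmS q hq.1 hq.2
    have hcard : S.ncard = m := by
      rw [hSeq, show Set.Icc 1 m = ↑(Finset.Icc 1 m) by simp,
        Set.ncard_coe_finset, Nat.card_Icc]
      omega
    rw [hcard, hSeq]

theorem Nice.set_finite (h : Nice M) (t : ℝ) :
    {p : ℕ | 1 ≤ p ∧ seqQuot M p ≤ t}.Finite := by
  obtain ⟨N, hN⟩ := (tendsto_atTop.mp h.2.2.2 (t+1)).exists_forall_of_atTop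
  apply Set.Finite.subset (Set.finite_Iio N)
  intro p hp
  simp only [Set.mem_Iio]
  by_contra hc
  have := hN p (by omega)
  linarith [hp.2]

theorem Nice.cnt_iff (h : Nice M) (t : ℝ) {p : ℕ} :
    (1 ≤ p ∧ seqQuot M p ≤ t) ↔ (1 ≤ p ∧ p ≤ SigmaM M t) := by
  have key : {q : ℕ | 1 ≤ q ∧ seqQuot M q ≤ t} = Set.Icc 1 (SigmaM M t) := by
    apply icc_of_dc (h.set_finite t)
    · simp
    · rintro q ⟨hq1, hq2⟩ r hr1 hr2
      exact ⟨hr1, le_trans (h.2.2.1 hr2) hq2⟩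
  constructor
  · intro hp
    have : p ∈ Set.Icc 1 (SigmaM M t) := key ▸ hp
    exact this
  · intro hp
    have : p ∈ {q : ℕ | 1 ≤ q ∧ seqQuot M q ≤ t} := by rw [key]; exact hp
    exact this

theorem Nice.le_cnt (h : Nice M) {t : ℝ} {p : ℕ} (hp : 1 ≤ p) (hq : seqQuot M p ≤ t) :
    p ≤ SigmaM M t := ((h.cnt_iff t).mp ⟨hp, hq⟩).2

theorem Nice.quot_le_of_le_cnt (h : Nice M) {t : ℝ} {p : ℕ} (hp : 1 ≤ p)
    (hq : p ≤ SigmaM M t) : seqQuot M p ≤ t := ((h.cnt_iff t).mpr ⟨hp, hq⟩).2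

theorem log_ratio (h : Nice M) {t : ℝ} (ht : 0 < t) (p : ℕ) :
    Real.log (t ^ p / M p) = ∑ j ∈ Finset.range p, Real.log (t / seqQuot M (j + 1)) := by
  induction p with
  | zero => simp [h.2.1]
  | succ n ih =>
    rw [Finset.sum_range_succ, ← ih]
    have hMn := h.pos n
    have hMn1 := h.pos (n+1)
    have hq : 0 < seqQuot M (n+1) := lt_of_lt_of_le zero_lt_one (h.one_le_quot _)
    have harg : t ^ (n+1) / M (n+1) = (t ^ n / M n) * (t / seqQuot M (n+1)) := by
      rw [seqQuot_succ]
      field_simp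
      ring
    rw [harg, Real.log_mul (by positivity) (by positivity)]

theorem Nice.partial_le (h : Nice M) {t : ℝ} (ht : 0 < t) (p : ℕ) :
    ∑ j ∈ Finset.range p, Real.log (t / seqQuot M (j + 1)) ≤
      ∑ j ∈ Finset.range (SigmaM M t), Real.log (t / seqQuot M (j + 1)) := by
  set n := SigmaM M t with hn
  rcases le_total p n with hpn | hpn
  · have hsplit := Finset.sum_Ico_consecutive (fun j => Real.log (t / seqQuot M (j + 1)))
      (Nat.zero_le p) hpn
    rw [← Finset.range_eq_Ico, ← Finset.range_eq_Ico] at hsplit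
    rw [← hsplit, le_add_iff_nonneg_right]
    apply Finset.sum_nonneg
    intro j hj
    rw [Finset.mem_Ico] at hj
    have hq : seqQuot M (j+1) ≤ t := h.quot_le_of_le_cnt (by omega) (by omega)
    have hq0 : 0 < seqQuot M (j+1) := lt_of_lt_of_le zero_lt_one (h.one_le_quot _)
    apply Real.log_nonneg
    rw [le_div_iff₀ hq0, one_mul]
    exact hq
  · have hsplit := Finset.sum_Ico_consecutive (fun j => Real.log (t / seqQuot M (j + 1)))
      (Nat.zero_le n) hpn
    rw [← Finset.range_eq_Ico, ← Finset.range_eq_Ico] at hsplit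
    rw [← hsplit, add_le_iff_nonpos_right]
    apply Finset.sum_nonpos
    intro j hj
    rw [Finset.mem_Ico] at hj
    have hq0 : 0 < seqQuot M (j+1) := lt_of_lt_of_le zero_lt_one (h.one_le_quot _)
    have hnot : ¬ (seqQuot M (j+1) ≤ t) := by
      intro hc
      have := h.le_cnt (p := j+1) (by omega) hc
      omega
    apply Real.log_nonpos
    · positivity
    · rw [div_le_one hq0]
      linarith [lt_of_not_ge hnot]

theorem Nice.omega_eq (h : Nice M) {t : ℝ} (ht : 0 < t) :
    omegaM M t = ∑ j ∈ Finset.range (SigmaM M t), Real.log (t / seqQuot M (j + 1)) := by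
  have hcong : (fun p : ℕ => Real.log (t ^ p / M p)) =
      fun p : ℕ => ∑ j ∈ Finset.range p, Real.log (t / seqQuot M (j + 1)) :=
    funext (log_ratio h ht)
  rw [omegaM, hcong]
  apply le_antisymm
  · exact ciSup_le (h.partial_le ht)
  · exact le_ciSup ⟨_, by rintro x ⟨p, rfl⟩; exact h.partial_le ht p⟩ (SigmaM M t)

theorem Nice.log_le_omega (h : Nice M) {t : ℝ} (ht : 0 < t) (p : ℕ) :
    Real.log (t ^ p / M p) ≤ omegaM M t := by
  rw [h.omega_eq ht, log_ratio h ht]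
  exact h.partial_le ht p

theorem omega_zero (h : Nice M) : omegaM M 0 = 0 := by
  have : (fun p : ℕ => Real.log ((0:ℝ) ^ p / M p)) = fun _ => (0:ℝ) := by
    funext p
    cases p with
    | zero => simp [h.2.1]
    | succ n => simp [zero_pow (Nat.succ_ne_zero n)]
  rw [omegaM, this, ciSup_const]

theorem Nice.omega_at_quot (h : Nice M) (p : ℕ) :
    omegaM M (seqQuot M p) = Real.log ((seqQuot M p) ^ p / M p) := by
  set t := seqQuot M p with htd
  have ht : 0 < t := lt_of_lt_of_le zero_lt_one (h.one_le_quot _)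
  set n := SigmaM M t with hnd
  have hpn : p ≤ n := by
    rcases Nat.eq_zero_or_pos p with rfl | hp1
    · omega
    · exact h.le_cnt hp1 le_rfl
  rw [h.omega_eq ht, log_ratio h ht]
  have hsplit := Finset.sum_Ico_consecutive (fun j => Real.log (t / seqQuot M (j + 1)))
    (Nat.zero_le p) hpn
  rw [← Finset.range_eq_Ico, ← Finset.range_eq_Ico] at hsplit
  rw [← hnd, ← hsplit, add_eq_left]
  apply Finset.sum_eq_zero
  intro j hj
  rw [Finset.mem_Ico] at hj
  have h1 : seqQuot M (j+1) ≤ t := h.quot_le_of_le_cnt (by omega) (by omega)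
  have h2 : t ≤ seqQuot M (j+1) := h.2.2.1 (by omega)
  rw [le_antisymm h1 h2, div_self (by positivity), Real.log_one]

theorem Nice.eq_pow_mul_exp (h : Nice M) (p : ℕ) :
    M p = (seqQuot M p) ^ p * Real.exp (- omegaM M (seqQuot M p)) := by
  have ht : 0 < seqQuot M p := lt_of_lt_of_le zero_lt_one (h.one_le_quot _)
  have hM := h.pos p
  rw [h.omega_at_quot p, ← Real.log_inv, Real.exp_log (by positivity)]
  field_simp

theorem Nice.pow_mul_exp_le (h : Nice M) {t : ℝ} (ht : 0 < t) (p : ℕ) :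
    t ^ p * Real.exp (- omegaM M t) ≤ M p := by
  have hlog := h.log_le_omega ht p
  have hM := h.pos p
  rw [Real.log_le_iff_le_exp (by positivity)] at hlog
  rw [Real.exp_neg]
  rw [div_le_iff₀ hM] at hlog
  calc t ^ p * (Real.exp (omegaM M t))⁻¹ ≤ (Real.exp (omegaM M t) * M p) * (Real.exp (omegaM M t))⁻¹ := by
        apply mul_le_mul_of_nonneg_right hlog (by positivity)
  _ = M p := by field_simp

theorem le_pow_quot' {N : ℕ → ℝ} (hpos : ∀ p, 0 < N p) (h0 : N 0 = 1)
    (hmono : Monotone (seqQuot N)) (p : ℕ) : N p ≤ (seqQuot N p) ^ p := by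
  have hone : ∀ q, 1 ≤ seqQuot N q := fun q => by
    simpa [seqQuot_zero] using hmono (Nat.zero_le q)
  induction p with
  | zero => simp [h0]
  | succ n ih =>
    have hNs : N (n+1) = seqQuot N (n+1) * N n := by
      rw [seqQuot_succ, div_mul_cancel₀]; exact (hpos n).ne'
    calc N (n+1) = seqQuot N (n+1) * N n := hNs
    _ ≤ seqQuot N (n+1) * (seqQuot N n) ^ n :=
        mul_le_mul_of_nonneg_left ih (le_trans zero_le_one (hone _))
    _ ≤ seqQuot N (n+1) * (seqQuot N (n+1)) ^ n :=
        mul_le_mul_of_nonneg_left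
          (pow_le_pow_left₀ (le_trans zero_le_one (hone n)) (hmono (Nat.le_succ n)) n)
          (le_trans zero_le_one (hone _))
    _ = (seqQuot N (n+1)) ^ (n+1) := by ring

theorem rpow_le_quot' {N : ℕ → ℝ} (hpos : ∀ p, 0 < N p) (h0 : N 0 = 1)
    (hmono : Monotone (seqQuot N)) {p : ℕ} (hp : 1 ≤ p) :
    (N p) ^ ((p : ℝ)⁻¹) ≤ seqQuot N p := by
  have hone : ∀ q, 1 ≤ seqQuot N q := fun q => by
    simpa [seqQuot_zero] using hmono (Nat.zero_le q)
  have hq : (0:ℝ) ≤ seqQuot N p := le_trans zero_le_one (hone p)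
  calc (N p) ^ ((p : ℝ)⁻¹) ≤ ((seqQuot N p) ^ p) ^ ((p:ℝ)⁻¹) :=
      Real.rpow_le_rpow (hpos p).le (le_pow_quot' hpos h0 hmono p) (by positivity)
  _ = seqQuot N p := by
      rw [← Real.rpow_natCast (seqQuot N p) p, ← Real.rpow_mul hq,
        mul_inv_cancel₀ (by exact_mod_cast (by omega : p ≠ 0)), Real.rpow_one]

theorem isLC_nice (hM : (∀ p, 0 < M p) ∧ M 0 = 1 ∧ 1 ≤ M 1 ∧
    (∀ p : ℕ, 1 ≤ p → (M p) ^ 2 ≤ M (p - 1) * M (p + 1)) ∧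
    Tendsto (fun p : ℕ => (M p) ^ ((p : ℝ)⁻¹)) atTop atTop) : Nice M := by
  obtain ⟨hpos, h0, h1, hlc, htend⟩ := hM
  have hmono : Monotone (seqQuot M) := by
    apply monotone_nat_of_le_succ
    intro n
    cases n with
    | zero =>
      rw [seqQuot_zero, seqQuot_succ, h0, div_one]
      exact h1
    | succ k =>
      rw [seqQuot_succ, seqQuot_succ]
      have := hlc (k+1) (by omega)
      simp only [Nat.add_sub_cancel] at this
      rw [div_le_div_iff₀ (hpos k) (hpos (k+1))]
      nlinarith [hpos k, hpos (k+1), hpos (k+2)]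
  refine ⟨hpos, h0, hmono, ?_⟩
  apply tendsto_atTop_mono' atTop ?_ htend
  filter_upwards [eventually_ge_atTop 1] with p hp
  exact rpow_le_quot' hpos h0 hmono hp

theorem tilde_quot (hpos : ∀ p, 0 < M p) {a : ℕ} (p : ℕ) :
    seqQuot (tildeSeq M a) (p + 1) = (M (a * (p + 1)) / M (a * p)) ^ ((a : ℝ)⁻¹) := by
  rw [seqQuot_succ, tildeSeq, tildeSeq, Real.div_rpow (hpos _).le (hpos _).le]

theorem nice_tilde (hN : Nice M)
    (htend : Tendsto (fun p : ℕ => (M p) ^ ((p : ℝ)⁻¹)) atTop atTop)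
    {a : ℕ} (ha : 0 < a) : Nice (tildeSeq M a) := by
  have hpos := hN.pos
  have hNpos : ∀ p, 0 < tildeSeq M a p := fun p => Real.rpow_pos_of_pos (hpos _) _
  have hN0 : tildeSeq M a 0 = 1 := by
    rw [tildeSeq, Nat.mul_zero, hN.2.1, Real.one_rpow]
  have hmono : Monotone (seqQuot (tildeSeq M a)) := by
    apply monotone_nat_of_le_succ
    intro n
    cases n with
    | zero =>
      rw [seqQuot_zero, tilde_quot hpos]
      have hratio : (1:ℝ) ≤ M (a * 1) / M (a * 0) := by
        rw [Nat.mul_zero, hN.2.1, div_one]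
        exact hN.one_le _
      calc (1:ℝ) = 1 ^ ((a:ℝ)⁻¹) := (Real.one_rpow _).symm
      _ ≤ (M (a * 1) / M (a * 0)) ^ ((a:ℝ)⁻¹) :=
          Real.rpow_le_rpow zero_le_one hratio (by positivity)
    | succ k =>
      rw [tilde_quot hpos, tilde_quot hpos]
      apply Real.rpow_le_rpow (div_nonneg (hpos _).le (hpos _).le) _ (by positivity)
      rw [div_le_div_iff₀ (hpos _) (hpos _)]
      have := hN.cross (a * k) (a * (k+1)) (by nlinarith) a
      rw [show a * k + a = a * (k+1) by ring, show a * (k+1) + a = a * (k+1+1) by ring] at this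
      linarith
  refine ⟨hNpos, hN0, hmono, ?_⟩
  have hcomp : Tendsto (fun p : ℕ => (M (a * p)) ^ (((a * p : ℕ) : ℝ)⁻¹)) atTop atTop := by
    apply htend.comp
    exact tendsto_atTop_mono (fun p => Nat.le_mul_of_pos_left p ha) tendsto_id
  apply tendsto_atTop_mono' atTop ?_ hcomp
  filter_upwards [eventually_ge_atTop 1] with p hp
  have heq : (M (a*p)) ^ (((a*p : ℕ) : ℝ)⁻¹) = (tildeSeq M a p) ^ ((p:ℝ)⁻¹) := by
    simp only [tildeSeq]
    rw [← Real.rpow_mul (hpos _).le]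
    congr 1
    push_cast
    rw [mul_inv]
  rw [heq]
  exact rpow_le_quot' hNpos hN0 hmono hp


theorem sum_range_two_mul (g : ℕ → ℝ) (n : ℕ) :
    ∑ k ∈ Finset.range (2 * n), g k = ∑ j ∈ Finset.range n, (g (2 * j) + g (2 * j + 1)) := by
  induction n with
  | zero => simp
  | succ m ih =>
    rw [Finset.sum_range_succ, ← ih, show 2 * (m + 1) = (2 * m + 1) + 1 by ring,
      Finset.sum_range_succ, Finset.sum_range_succ]
    ring

theorem tilde_rpow (hpos : ∀ p, 0 < M p) (a p : ℕ) :
    (M (a * p)) ^ (((a : ℝ) * (p : ℝ))⁻¹) = (tildeSeq M a p) ^ ((p : ℝ)⁻¹) := by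
  simp only [tildeSeq]
  rw [← Real.rpow_mul (hpos _).le, mul_inv]

theorem step_i_ii (hNM : Nice M) (hNtilde : ∀ a : ℕ, 0 < a → Nice (tildeSeq M a))
    (h : ∃ a : ℕ, 0 < a ∧ ∃ A : ℝ, 1 ≤ A ∧ ∀ p : ℕ, 1 ≤ p →
      seqQuot L p ≤ A * (M (a * p)) ^ (((a : ℝ) * (p : ℝ))⁻¹)) :
    ∃ a : ℕ, 0 < a ∧ ∃ A : ℝ, 1 ≤ A ∧ ∀ p : ℕ,
      seqQuot L (2 * p) ≤ A * seqQuot (tildeSeq M (2 * a)) p := by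
  obtain ⟨a, ha, A, hA, hcond⟩ := h
  refine ⟨a, ha, A, hA, ?_⟩
  intro p
  have hN := hNtilde (2 * a) (by omega)
  cases p with
  | zero =>
    show seqQuot L (2 * 0) ≤ A * seqQuot (tildeSeq M (2 * a)) 0
    rw [Nat.mul_zero, seqQuot_zero, seqQuot_zero, mul_one]
    exact hA
  | succ n =>
    have h1 := hcond (2 * (n + 1)) (by omega)
    have heq : (M (a * (2 * (n + 1)))) ^ (((a : ℝ) * ((2 * (n + 1) : ℕ) : ℝ))⁻¹)
        = (tildeSeq M (2 * a) (n + 1)) ^ (((n + 1 : ℕ) : ℝ)⁻¹) := by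
      rw [← tilde_rpow hNM.pos (2 * a) (n + 1), show a * (2 * (n + 1)) = 2 * a * (n + 1) by ring]
      congr 1
      push_cast
      ring
    rw [heq] at h1
    calc seqQuot L (2 * (n + 1)) ≤ A * (tildeSeq M (2 * a) (n + 1)) ^ (((n + 1 : ℕ) : ℝ)⁻¹) := h1
    _ ≤ A * seqQuot (tildeSeq M (2 * a)) (n + 1) :=
        mul_le_mul_of_nonneg_left (hN.rpow_le_quot (by omega)) (by linarith)

theorem step_ii_iii (hNL : Nice L) (hNtilde : ∀ a : ℕ, 0 < a → Nice (tildeSeq M a))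
    (h : ∃ a : ℕ, 0 < a ∧ ∃ A : ℝ, 1 ≤ A ∧ ∀ p : ℕ,
      seqQuot L (2 * p) ≤ A * seqQuot (tildeSeq M (2 * a)) p) :
    ∃ a : ℕ, 0 < a ∧ ∃ A : ℝ, 1 ≤ A ∧ ∀ t : ℝ, 0 ≤ t →
      2 * SigmaM (tildeSeq M (2 * a)) t ≤ SigmaM L (A * t) := by
  obtain ⟨a, ha, A, hA, hcond⟩ := h
  refine ⟨a, ha, A, hA, ?_⟩
  intro t ht
  have hN := hNtilde (2 * a) (by omega)
  set n := SigmaM (tildeSeq M (2 * a)) t with hn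
  rcases Nat.eq_zero_or_pos n with h0 | hpos
  · omega
  · have h1 : seqQuot (tildeSeq M (2 * a)) n ≤ t := hN.quot_le_of_le_cnt hpos le_rfl
    have h2 : seqQuot L (2 * n) ≤ A * t :=
      le_trans (hcond n) (mul_le_mul_of_nonneg_left h1 (by linarith))
    exact hNL.le_cnt (by omega) h2

theorem step_iii_ii (hNL : Nice L) (hNtilde : ∀ a : ℕ, 0 < a → Nice (tildeSeq M a))
    (h : ∃ a : ℕ, 0 < a ∧ ∃ A : ℝ, 1 ≤ A ∧ ∀ t : ℝ, 0 ≤ t →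
      2 * SigmaM (tildeSeq M (2 * a)) t ≤ SigmaM L (A * t)) :
    ∃ a : ℕ, 0 < a ∧ ∃ A : ℝ, 1 ≤ A ∧ ∀ p : ℕ,
      seqQuot L (2 * p) ≤ A * seqQuot (tildeSeq M (2 * a)) p := by
  obtain ⟨a, ha, A, hA, hcond⟩ := h
  refine ⟨a, ha, A, hA, ?_⟩
  intro p
  have hN := hNtilde (2 * a) (by omega)
  cases p with
  | zero =>
    show seqQuot L (2 * 0) ≤ A * seqQuot (tildeSeq M (2 * a)) 0
    rw [Nat.mul_zero, seqQuot_zero, seqQuot_zero, mul_one]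
    exact hA
  | succ m =>
    set ν := seqQuot (tildeSeq M (2 * a)) (m + 1) with hν
    have hν1 : (1 : ℝ) ≤ ν := hN.one_le_quot (m + 1)
    have hcnt : m + 1 ≤ SigmaM (tildeSeq M (2 * a)) ν := hN.le_cnt (by omega) le_rfl
    have h2 := hcond ν (by linarith)
    exact hNL.quot_le_of_le_cnt (by omega) (by omega)


theorem step_ii_iv (hNL : Nice L) (hNtilde : ∀ a : ℕ, 0 < a → Nice (tildeSeq M a))
    (h : ∃ a : ℕ, 0 < a ∧ ∃ A : ℝ, 1 ≤ A ∧ ∀ p : ℕ,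
      seqQuot L (2 * p) ≤ A * seqQuot (tildeSeq M (2 * a)) p) :
    ∃ a : ℕ, 0 < a ∧ ∃ A : ℝ, 1 ≤ A ∧ ∀ t : ℝ, 0 ≤ t →
      2 * omegaM (tildeSeq M (2 * a)) t ≤ omegaM L (A * t) := by
  obtain ⟨a, ha, A, hA, hcond⟩ := h
  refine ⟨a, ha, A, hA, ?_⟩
  intro t ht
  have hN := hNtilde (2 * a) (by omega)
  rcases eq_or_lt_of_le ht with h0 | htpos
  · rw [← h0, mul_zero, omega_zero hN, omega_zero hNL]
    norm_num
  · have hA0 : (0:ℝ) < A := lt_of_lt_of_le zero_lt_one hA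
    have hAt : 0 < A * t := mul_pos hA0 htpos
    rw [hN.omega_eq htpos, hNL.omega_eq hAt]
    set n := SigmaM (tildeSeq M (2 * a)) t with hn
    have hs1 : ∑ k ∈ Finset.range (2 * n), Real.log (A * t / seqQuot L (k + 1)) ≤
        ∑ k ∈ Finset.range (SigmaM L (A * t)), Real.log (A * t / seqQuot L (k + 1)) :=
      hNL.partial_le hAt (2 * n)
    have hs2 : 2 * ∑ j ∈ Finset.range n, Real.log (t / seqQuot (tildeSeq M (2 * a)) (j + 1)) ≤
        ∑ k ∈ Finset.range (2 * n), Real.log (A * t / seqQuot L (k + 1)) := by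
      rw [sum_range_two_mul, Finset.mul_sum]
      apply Finset.sum_le_sum
      intro j hj
      set ν := seqQuot (tildeSeq M (2 * a)) (j + 1) with hν
      have hν1 : (1:ℝ) ≤ ν := hN.one_le_quot (j + 1)
      have hν0 : (0:ℝ) < ν := by linarith
      have hqj : seqQuot L (2 * (j + 1)) ≤ A * ν := hcond (j + 1)
      have hL1 : (1:ℝ) ≤ seqQuot L (2 * j + 1) := hNL.one_le_quot _
      have hL2 : (1:ℝ) ≤ seqQuot L (2 * j + 2) := hNL.one_le_quot _
      have hmono1 : seqQuot L (2 * j + 1) ≤ seqQuot L (2 * (j + 1)) := hNL.2.2.1 (by omega)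
      have key : ∀ q : ℝ, 1 ≤ q → q ≤ A * ν →
          Real.log (t / ν) ≤ Real.log (A * t / q) := by
        intro q hq1 hq2
        apply Real.log_le_log (by positivity)
        calc t / ν = A * t / (A * ν) := by
              field_simp
        _ ≤ A * t / q := by
            apply div_le_div_of_nonneg_left hAt.le (by linarith) hq2
      have k1 : Real.log (t / ν) ≤ Real.log (A * t / seqQuot L (2 * j + 1)) :=
        key _ hL1 (le_trans hmono1 hqj)
      have k2 : Real.log (t / ν) ≤ Real.log (A * t / seqQuot L (2 * j + 1 + 1)) := by
        apply key _ (hNL.one_le_quot _)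
        rw [show 2 * j + 1 + 1 = 2 * (j + 1) by ring]
        exact hqj
      linarith
    calc 2 * ∑ j ∈ Finset.range n, Real.log (t / seqQuot (tildeSeq M (2 * a)) (j + 1)) ≤
        ∑ k ∈ Finset.range (2 * n), Real.log (A * t / seqQuot L (k + 1)) := hs2
    _ ≤ _ := hs1

theorem step_iv_v (hL0 : L 0 = 1) (hNL : Nice L) (hNtilde : ∀ a : ℕ, 0 < a → Nice (tildeSeq M a))
    (h : ∃ a : ℕ, 0 < a ∧ ∃ A : ℝ, 1 ≤ A ∧ ∀ t : ℝ, 0 ≤ t →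
      2 * omegaM (tildeSeq M (2 * a)) t ≤ omegaM L (A * t)) :
    ∃ a : ℕ, 0 < a ∧ ∃ A : ℝ, 1 ≤ A ∧ ∀ p q : ℕ,
      L (p + q) ≤ A ^ (p + q) * tildeSeq M (2 * a) p * tildeSeq M (2 * a) q := by
  obtain ⟨a, ha, A, hA, hcond⟩ := h
  refine ⟨a, ha, A, hA, ?_⟩
  intro p q
  have hN := hNtilde (2 * a) (by omega)
  rcases Nat.eq_zero_or_pos (p + q) with h0 | hpq
  · obtain ⟨rfl, rfl⟩ : p = 0 ∧ q = 0 := by omega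
    simp [hL0, hN.2.1]
  · have hA0 : (0:ℝ) < A := lt_of_lt_of_le zero_lt_one hA
    set t := seqQuot L (p + q) with htd
    have ht : (0:ℝ) < t := lt_of_lt_of_le zero_lt_one (hNL.one_le_quot _)
    set s := t / A with hsd
    have hs : (0:ℝ) < s := by positivity
    have hAs : A * s = t := by
      rw [hsd]
      field_simp
    have h1 : 2 * omegaM (tildeSeq M (2 * a)) s ≤ omegaM L t := by
      have := hcond s hs.le
      rwa [hAs] at this
    have hNp := hN.pow_mul_exp_le hs p
    have hNq := hN.pow_mul_exp_le hs q
    have hexp : Real.exp (-(2 * omegaM (tildeSeq M (2 * a)) s)) =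
        Real.exp (-omegaM (tildeSeq M (2 * a)) s) * Real.exp (-omegaM (tildeSeq M (2 * a)) s) := by
      rw [← Real.exp_add]
      ring_nf
    calc L (p + q) = t ^ (p + q) * Real.exp (-omegaM L t) := hNL.eq_pow_mul_exp (p + q)
    _ ≤ t ^ (p + q) * Real.exp (-(2 * omegaM (tildeSeq M (2 * a)) s)) := by
        apply mul_le_mul_of_nonneg_left (Real.exp_le_exp.mpr (by linarith)) (by positivity)
    _ = A ^ (p + q) * (s ^ p * Real.exp (-omegaM (tildeSeq M (2 * a)) s)) *
          (s ^ q * Real.exp (-omegaM (tildeSeq M (2 * a)) s)) := by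
        rw [hexp, ← hAs, mul_pow, pow_add]
        ring
    _ ≤ A ^ (p + q) * tildeSeq M (2 * a) p * tildeSeq M (2 * a) q := by
        have e1 : (0:ℝ) ≤ s ^ q * Real.exp (-omegaM (tildeSeq M (2 * a)) s) := by positivity
        have e2 : (0:ℝ) ≤ A ^ (p + q) * tildeSeq M (2 * a) p :=
          mul_nonneg (by positivity) (hN.pos p).le
        exact mul_le_mul (mul_le_mul_of_nonneg_left hNp (by positivity)) hNq e1 e2

theorem step_v_vi {L : ℕ → ℝ} {a : ℕ} {A : ℝ} (hA : 1 ≤ A)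
    (h : ∀ p q : ℕ, L (p + q) ≤ A ^ (p + q) * tildeSeq M (2 * a) p * tildeSeq M (2 * a) q) :
    ∀ p : ℕ, L (2 * p) ≤ (A ^ 2) ^ p * (tildeSeq M (2 * a) p) ^ 2 := by
  intro p
  calc L (2 * p) = L (p + p) := by rw [two_mul]
  _ ≤ A ^ (p + p) * tildeSeq M (2 * a) p * tildeSeq M (2 * a) p := h p p
  _ = (A ^ 2) ^ p * (tildeSeq M (2 * a) p) ^ 2 := by ring

theorem step_vi_v (hNL : Nice L) (hNtilde : ∀ a : ℕ, 0 < a → Nice (tildeSeq M a))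
    (h : ∃ a : ℕ, 0 < a ∧ ∃ A : ℝ, 1 ≤ A ∧ ∀ p : ℕ,
      L (2 * p) ≤ A ^ p * (tildeSeq M (2 * a) p) ^ 2) :
    ∃ a : ℕ, 0 < a ∧ ∃ A : ℝ, 1 ≤ A ∧ ∀ p q : ℕ,
      L (p + q) ≤ A ^ (p + q) * tildeSeq M (2 * a) p * tildeSeq M (2 * a) q := by
  obtain ⟨a, ha, A, hA, hcond⟩ := h
  refine ⟨a, ha, A, hA, ?_⟩
  intro p q
  have hN := hNtilde (2 * a) (by omega)
  have hA0 : (0:ℝ) < A := lt_of_lt_of_le zero_lt_one hA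
  have hsq : L (p + q) ^ 2 ≤ L (2 * p) * L (2 * q) := hNL.sq_le p q
  have h2 : L (2 * p) * L (2 * q) ≤
      (A ^ p * (tildeSeq M (2 * a) p) ^ 2) * (A ^ q * (tildeSeq M (2 * a) q) ^ 2) :=
    mul_le_mul (hcond p) (hcond q) (hNL.pos _).le
      (mul_nonneg (by positivity) (by positivity))
  have hApq : (1:ℝ) ≤ A ^ (p + q) := one_le_pow₀ hA
  have hfin : L (p + q) ^ 2 ≤ (A ^ (p + q) * tildeSeq M (2 * a) p * tildeSeq M (2 * a) q) ^ 2 := by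
    have e1 : (A ^ p * (tildeSeq M (2 * a) p) ^ 2) * (A ^ q * (tildeSeq M (2 * a) q) ^ 2)
        = A ^ (p + q) * ((tildeSeq M (2 * a) p) ^ 2 * (tildeSeq M (2 * a) q) ^ 2) := by
      rw [pow_add]
      ring
    have e2 : A ^ (p + q) * ((tildeSeq M (2 * a) p) ^ 2 * (tildeSeq M (2 * a) q) ^ 2) ≤
        (A ^ (p + q)) ^ 2 * ((tildeSeq M (2 * a) p) ^ 2 * (tildeSeq M (2 * a) q) ^ 2) := by
      apply mul_le_mul_of_nonneg_right _ (by positivity)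
      nlinarith
    calc L (p + q) ^ 2 ≤ (A ^ p * (tildeSeq M (2 * a) p) ^ 2) * (A ^ q * (tildeSeq M (2 * a) q) ^ 2) :=
          le_trans hsq h2
    _ ≤ (A ^ (p + q)) ^ 2 * ((tildeSeq M (2 * a) p) ^ 2 * (tildeSeq M (2 * a) q) ^ 2) := by
        rw [e1] at *
        exact e2
    _ = (A ^ (p + q) * tildeSeq M (2 * a) p * tildeSeq M (2 * a) q) ^ 2 := by ring
  have h0L : (0:ℝ) ≤ L (p + q) := (hNL.pos _).le
  have h0R : (0:ℝ) ≤ A ^ (p + q) * tildeSeq M (2 * a) p * tildeSeq M (2 * a) q := by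
    have := (hN.pos p).le
    have := (hN.pos q).le
    positivity
  calc L (p + q) = Real.sqrt (L (p + q) ^ 2) := by rw [Real.sqrt_sq h0L]
  _ ≤ Real.sqrt ((A ^ (p + q) * tildeSeq M (2 * a) p * tildeSeq M (2 * a) q) ^ 2) :=
      Real.sqrt_le_sqrt hfin
  _ = _ := Real.sqrt_sq h0R

theorem step_v_iv (hNL : Nice L) (hNtilde : ∀ a : ℕ, 0 < a → Nice (tildeSeq M a))
    (h : ∃ a : ℕ, 0 < a ∧ ∃ A : ℝ, 1 ≤ A ∧ ∀ p q : ℕ,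
      L (p + q) ≤ A ^ (p + q) * tildeSeq M (2 * a) p * tildeSeq M (2 * a) q) :
    ∃ a : ℕ, 0 < a ∧ ∃ A : ℝ, 1 ≤ A ∧ ∀ t : ℝ, 0 ≤ t →
      2 * omegaM (tildeSeq M (2 * a)) t ≤ omegaM L (A * t) := by
  obtain ⟨a, ha, A, hA, hcond⟩ := h
  refine ⟨a, ha, A, hA, ?_⟩
  intro t ht
  have hN := hNtilde (2 * a) (by omega)
  rcases eq_or_lt_of_le ht with h0 | htpos
  · rw [← h0, mul_zero, omega_zero hN, omega_zero hNL]
    norm_num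
  · have hA0 : (0:ℝ) < A := lt_of_lt_of_le zero_lt_one hA
    have hAt : 0 < A * t := mul_pos hA0 htpos
    set n := SigmaM (tildeSeq M (2 * a)) t with hn
    set Np := tildeSeq M (2 * a) n with hNp
    have hNp0 : 0 < Np := hN.pos n
    have hωN : omegaM (tildeSeq M (2 * a)) t = Real.log (t ^ n / Np) := by
      rw [hN.omega_eq htpos, ← log_ratio hN htpos]
    have hLn : L (2 * n) ≤ A ^ (2 * n) * Np ^ 2 := by
      have := hcond n n
      rw [show n + n = 2 * n by ring] at this
      calc L (2 * n) ≤ A ^ (2 * n) * Np * Np := this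
      _ = A ^ (2 * n) * Np ^ 2 := by ring
    have hL2n : 0 < L (2 * n) := hNL.pos _
    have key : Real.log ((t ^ n / Np) ^ 2) ≤ Real.log ((A * t) ^ (2 * n) / L (2 * n)) := by
      apply Real.log_le_log (by positivity)
      rw [div_pow, div_le_div_iff₀ (by positivity) hL2n]
      have e1 : (t ^ n) ^ 2 = t ^ (2 * n) := by ring
      have e2 : (A * t) ^ (2 * n) = A ^ (2 * n) * t ^ (2 * n) := by rw [mul_pow]
      rw [e1, e2]
      nlinarith [pow_pos htpos (2 * n), pow_pos htpos n]
    have hstart : 2 * omegaM (tildeSeq M (2 * a)) t = Real.log ((t ^ n / Np) ^ 2) := by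
      rw [hωN, Real.log_pow]
      push_cast
      ring
    rw [hstart]
    exact le_trans key (hNL.log_le_omega hAt (2 * n))


theorem step_conv {L : ℕ → ℝ} (hNM : Nice M) (hNL : Nice L) (hL0 : L 0 = 1)
    {d b : ℕ} (hd : 0 < d) (hb : 0 < b)
    {A1 : ℝ} (hA1 : 1 ≤ A1)
    (hg : ∀ p : ℕ, 1 ≤ p → seqQuot L p ≤ A1 * (L (d * p)) ^ (((d : ℝ) * (p : ℝ))⁻¹))
    {A2 : ℝ} (hA2 : 1 ≤ A2)
    (h2 : ∀ p : ℕ, L (2 * p) ≤ A2 ^ p * (tildeSeq M b p) ^ 2) :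
    ∃ A : ℝ, 1 ≤ A ∧ ∀ p : ℕ, 1 ≤ p →
      seqQuot L p ≤ A * (M (d * b * p)) ^ ((((d : ℝ) * (b : ℝ)) * (p : ℝ))⁻¹) := by
  refine ⟨A1 * A2, by nlinarith, ?_⟩
  intro p hp
  have hA10 : (0:ℝ) < A1 := by linarith
  have hA20 : (0:ℝ) < A2 := by linarith
  set x := L (d * p) with hx
  have hx0 : 0 < x := hNL.pos _
  set y := M (b * (d * p)) with hy
  have hy0 : 0 < y := hNM.pos _
  -- L(dp)^2 ≤ L(2dp)
  have hLsq : x ^ 2 ≤ L (2 * (d * p)) := by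
    have := hNL.sq_le 0 (d * p)
    rw [Nat.mul_zero, hL0] at this
    simpa using this
  -- L(2dp) ≤ A2^(dp) * y^(2/b)
  have hstep : L (2 * (d * p)) ≤ A2 ^ (d * p) * y ^ ((2 : ℝ) / b) := by
    have := h2 (d * p)
    have e : (tildeSeq M b (d * p)) ^ 2 = y ^ ((2 : ℝ) / b) := by
      simp only [tildeSeq, ← hy]
      rw [← Real.rpow_natCast (y ^ ((b:ℝ)⁻¹)) 2, ← Real.rpow_mul hy0.le]
      congr 1
      push_cast
      ring
    rwa [e] at this
  have hxsq : x ^ (2:ℝ) ≤ A2 ^ (d * p) * y ^ ((2 : ℝ) / b) := by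
    rw [Real.rpow_two]
    exact le_trans hLsq hstep
  -- raise to power (2*d*p)⁻¹
  have hdp0 : (0:ℝ) < (d : ℝ) * (p : ℝ) := by
    have : (1:ℝ) ≤ (d:ℝ) := by exact_mod_cast hd
    have : (1:ℝ) ≤ (p:ℝ) := by exact_mod_cast hp
    nlinarith [show (1:ℝ) ≤ (d:ℝ) from by exact_mod_cast hd]
  have hb0 : (0:ℝ) < (b : ℝ) := by exact_mod_cast hb
  set e := ((2:ℝ) * ((d:ℝ) * (p:ℝ)))⁻¹ with he
  have he0 : 0 < e := by positivity
  have hmain := Real.rpow_le_rpow (by positivity) hxsq he0.le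
  have hLHS : (x ^ (2:ℝ)) ^ e = x ^ (((d:ℝ) * (p:ℝ))⁻¹) := by
    rw [← Real.rpow_mul hx0.le, he]
    congr 1
    field_simp
  have hRHS : (A2 ^ (d * p) * y ^ ((2 : ℝ) / b)) ^ e =
      A2 ^ ((1:ℝ)/2) * y ^ (((b:ℝ) * ((d:ℝ) * (p:ℝ)))⁻¹) := by
    rw [Real.mul_rpow (by positivity) (by positivity)]
    congr 1
    · rw [← Real.rpow_natCast A2 (d * p), ← Real.rpow_mul hA20.le, he]
      congr 1
      push_cast
      field_simp
    · rw [← Real.rpow_mul hy0.le, he]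
      congr 1
      field_simp
  rw [hLHS, hRHS] at hmain
  have hA2half : A2 ^ ((1:ℝ)/2) ≤ A2 := by
    calc A2 ^ ((1:ℝ)/2) ≤ A2 ^ (1:ℝ) :=
        Real.rpow_le_rpow_of_exponent_le hA2 (by norm_num)
    _ = A2 := Real.rpow_one A2
  have hfinal : x ^ (((d:ℝ) * (p:ℝ))⁻¹) ≤ A2 * y ^ (((b:ℝ) * ((d:ℝ) * (p:ℝ)))⁻¹) := by
    calc x ^ (((d:ℝ) * (p:ℝ))⁻¹) ≤ A2 ^ ((1:ℝ)/2) * y ^ (((b:ℝ) * ((d:ℝ) * (p:ℝ)))⁻¹) := hmain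
    _ ≤ A2 * y ^ (((b:ℝ) * ((d:ℝ) * (p:ℝ)))⁻¹) :=
        mul_le_mul_of_nonneg_right hA2half (by positivity)
  have hgoal_eq : (M (d * b * p)) ^ ((((d : ℝ) * (b : ℝ)) * (p : ℝ))⁻¹) =
      y ^ (((b:ℝ) * ((d:ℝ) * (p:ℝ)))⁻¹) := by
    rw [hy, show b * (d * p) = d * b * p by ring]
    congr 1
    ring
  rw [hgoal_eq]
  calc seqQuot L p ≤ A1 * x ^ (((d : ℝ) * (p : ℝ))⁻¹) := hg p hp
  _ ≤ A1 * (A2 * y ^ (((b:ℝ) * ((d:ℝ) * (p:ℝ)))⁻¹)) :=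
      mul_le_mul_of_nonneg_left hfinal (by linarith)
  _ = A1 * A2 * y ^ (((b:ℝ) * ((d:ℝ) * (p:ℝ)))⁻¹) := by ring

end Aux

theorem stmt5 (M L : ℕ → ℝ) (hM : IsLC M) (hL : IsLC L) :
    (((∃ a : ℕ, 0 < a ∧ ∃ A : ℝ, 1 ≤ A ∧ ∀ p : ℕ, 1 ≤ p →
          seqQuot L p ≤ A * (M (a * p)) ^ (((a : ℝ) * (p : ℝ))⁻¹)) →
        (∃ a : ℕ, 0 < a ∧ ∃ A : ℝ, 1 ≤ A ∧ ∀ p : ℕ,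
          seqQuot L (2 * p) ≤ A * seqQuot (tildeSeq M (2 * a)) p)) ∧
     ((∃ a : ℕ, 0 < a ∧ ∃ A : ℝ, 1 ≤ A ∧ ∀ p : ℕ,
          seqQuot L (2 * p) ≤ A * seqQuot (tildeSeq M (2 * a)) p) ↔
        (∃ a : ℕ, 0 < a ∧ ∃ A : ℝ, 1 ≤ A ∧ ∀ t : ℝ, 0 ≤ t →
          2 * SigmaM (tildeSeq M (2 * a)) t ≤ SigmaM L (A * t))) ∧
     ((∃ a : ℕ, 0 < a ∧ ∃ A : ℝ, 1 ≤ A ∧ ∀ t : ℝ, 0 ≤ t →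
          2 * SigmaM (tildeSeq M (2 * a)) t ≤ SigmaM L (A * t)) →
        (∃ a : ℕ, 0 < a ∧ ∃ A : ℝ, 1 ≤ A ∧ ∀ t : ℝ, 0 ≤ t →
          2 * omegaM (tildeSeq M (2 * a)) t ≤ omegaM L (A * t))) ∧
     ((∃ a : ℕ, 0 < a ∧ ∃ A : ℝ, 1 ≤ A ∧ ∀ t : ℝ, 0 ≤ t →
          2 * omegaM (tildeSeq M (2 * a)) t ≤ omegaM L (A * t)) ↔
        (∃ a : ℕ, 0 < a ∧ ∃ A : ℝ, 1 ≤ A ∧ ∀ p q : ℕ,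
          L (p + q) ≤ A ^ (p + q) * tildeSeq M (2 * a) p * tildeSeq M (2 * a) q)) ∧
     ((∃ a : ℕ, 0 < a ∧ ∃ A : ℝ, 1 ≤ A ∧ ∀ p q : ℕ,
          L (p + q) ≤ A ^ (p + q) * tildeSeq M (2 * a) p * tildeSeq M (2 * a) q) ↔
        (∃ a : ℕ, 0 < a ∧ ∃ A : ℝ, 1 ≤ A ∧ ∀ p : ℕ,
          L (2 * p) ≤ A ^ p * (tildeSeq M (2 * a) p) ^ 2))) ∧
    (∀ d b : ℕ, 0 < d → 0 < b → genMG L d →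
      (∃ A : ℝ, 1 ≤ A ∧ ∀ p : ℕ, L (2 * p) ≤ A ^ p * (tildeSeq M b p) ^ 2) →
      ∃ A : ℝ, 1 ≤ A ∧ ∀ p : ℕ, 1 ≤ p →
        seqQuot L p ≤ A * (M (d * b * p)) ^ ((((d : ℝ) * (b : ℝ)) * (p : ℝ))⁻¹)) := by
  
  have hNM : Aux.Nice M := Aux.isLC_nice hM
  have hNL : Aux.Nice L := Aux.isLC_nice hL
  have htM : Filter.Tendsto (fun p : ℕ => (M p) ^ ((p : ℝ)⁻¹)) Filter.atTop Filter.atTop :=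
    hM.2.2.2.2
  have hNt : ∀ a : ℕ, 0 < a → Aux.Nice (tildeSeq M a) := fun a ha =>
    Aux.nice_tilde hNM htM ha
  refine ⟨⟨Aux.step_i_ii hNM hNt, ⟨Aux.step_ii_iii hNL hNt, Aux.step_iii_ii hNL hNt⟩,
    fun h => Aux.step_ii_iv hNL hNt (Aux.step_iii_ii hNL hNt h),
    ⟨Aux.step_iv_v hL.2.1 hNL hNt, Aux.step_v_iv hNL hNt⟩,
    ⟨?_, Aux.step_vi_v hNL hNt⟩⟩, ?_⟩
  · rintro ⟨a, ha, A, hA, h⟩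
    exact ⟨a, ha, A ^ 2, one_le_pow₀ hA, Aux.step_v_vi hA h⟩
  · intro d b hd hb hgen hvi
    obtain ⟨A1, hA1, hg⟩ := hgen
    obtain ⟨A2, hA2, h2⟩ := hvi
    exact Aux.step_conv hNM hNL hL.2.1 hd hb hA1 hg hA2 h2
end

section
/- Let M be a log-convex sequence of positive reals with M_0 = 1 that satisfies (genmg) for some a ∈ ℕ_{>0}. Then any log-convex sequence N of positive reals with N_0 = 1 that is equivalent to M satisfies (genmg) for 2a. In particular, condition (genmg) (for some d) is preserved under equivalence of normalized log-convex sequences. -/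
/-!
Log-convexity makes the quotients `μ_p` of `M` and `ν_p` of `N` increasing from `p = 1` on,
so `N_p (ν_p)^p ≤ N_{2p}` and `M_{2p} ≤ M_p (μ_{2p})^p`. Together with `M_q ≤ C^q N_q` and
`N_q ≤ C^q M_q` this gives `ν_p ≤ C^3 μ_{2p}`. Condition (genmg) for `M` at the index `2p`
bounds `μ_{2p}` by `A (M_{2ap})^{1/(2ap)}`, and `(M_{2ap})^{1/(2ap)} ≤ C (N_{2ap})^{1/(2ap)}`.
-/


open Real Filter Set

def LogConvex (M : ℕ → ℝ) : Prop :=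
  ∀ p : ℕ, 1 ≤ p → M p ^ 2 ≤ M (p - 1) * M (p + 1)

lemma seqQuot_pos {M : ℕ → ℝ} (hM : ∀ p, 0 < M p) (p : ℕ) : 0 < seqQuot M p := by
  unfold seqQuot
  split_ifs
  exacts [one_pos, div_pos (hM p) (hM (p - 1))]

lemma mul_seqQuot_succ {M : ℕ → ℝ} {n : ℕ} (hM : M n ≠ 0) :
    M n * seqQuot M (n + 1) = M (n + 1) := by
  simp [seqQuot, mul_div_cancel₀ _ hM]

namespace LogConvex

variable {M : ℕ → ℝ}

lemma seqQuot_le_seqQuot_succ (hlc : LogConvex M) (hM : ∀ p, 0 < M p) {p : ℕ} (hp : 1 ≤ p) :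
    seqQuot M p ≤ seqQuot M (p + 1) := by
  obtain ⟨n, rfl⟩ : ∃ n, p = n + 1 := ⟨p - 1, by omega⟩
  have h := hlc (n + 1) hp
  simp only [Nat.add_sub_cancel] at h
  simp only [seqQuot, Nat.add_eq_zero_iff, one_ne_zero, and_false, if_false,
    Nat.add_sub_cancel]
  rw [div_le_div_iff₀ (hM n) (hM (n + 1))]
  nlinarith

lemma monotoneOn_seqQuot (hlc : LogConvex M) (hM : ∀ p, 0 < M p) :
    MonotoneOn (seqQuot M) {p | 1 ≤ p} :=
  monotoneOn_nat_Ici_of_le_succ fun _ hn => hlc.seqQuot_le_seqQuot_succ hM hn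

lemma mul_seqQuot_pow_le (hlc : LogConvex M) (hM : ∀ p, 0 < M p) {p : ℕ} (hp : 1 ≤ p)
    (k : ℕ) : M p * seqQuot M p ^ k ≤ M (p + k) := by
  induction k with
  | zero => simp
  | succ k ih =>
    have hmono : seqQuot M p ≤ seqQuot M (p + k + 1) :=
      hlc.monotoneOn_seqQuot hM hp (show 1 ≤ p + k + 1 by omega) (by omega)
    calc M p * seqQuot M p ^ (k + 1) = M p * seqQuot M p ^ k * seqQuot M p := by ring
      _ ≤ M (p + k) * seqQuot M (p + k + 1) :=
        mul_le_mul ih hmono (seqQuot_pos hM p).le (hM _).le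
      _ = M (p + (k + 1)) := mul_seqQuot_succ (hM _).ne'

lemma le_mul_seqQuot_pow (hlc : LogConvex M) (hM : ∀ p, 0 < M p) {p : ℕ} (hp : 1 ≤ p)
    (k : ℕ) : M (p + k) ≤ M p * seqQuot M (p + k) ^ k := by
  induction k with
  | zero => simp
  | succ k ih =>
    have hmono : seqQuot M (p + k) ≤ seqQuot M (p + k + 1) :=
      hlc.seqQuot_le_seqQuot_succ hM (by omega)
    calc M (p + (k + 1)) = M (p + k) * seqQuot M (p + k + 1) :=
          (mul_seqQuot_succ (hM _).ne').symm
      _ ≤ M p * seqQuot M (p + k) ^ k * seqQuot M (p + k + 1) :=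
        mul_le_mul_of_nonneg_right ih (seqQuot_pos hM _).le
      _ ≤ M p * seqQuot M (p + k + 1) ^ k * seqQuot M (p + k + 1) := by
        have := seqQuot_pos hM (p + k)
        have := seqQuot_pos hM (p + k + 1)
        have := hM p
        gcongr
      _ = M p * seqQuot M (p + (k + 1)) ^ (k + 1) := by rw [← add_assoc]; ring

end LogConvex

lemma Preceq.eventually_le_pow_mul {M N : ℕ → ℝ} (hM : ∀ p, 0 ≤ M p) (hN : ∀ p, 0 < N p)
    (h : Preceq M N) : ∀ᶠ C in atTop, ∀ p : ℕ, 1 ≤ p → M p ≤ C ^ p * N p := by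
  obtain ⟨C₀, hC₀⟩ := h
  refine eventually_atTop.2 ⟨max 1 C₀, fun C hC p hp => ?_⟩
  have hp' : (0 : ℝ) < p := by exact_mod_cast hp
  have hroot : (M p / N p) ^ (p : ℝ)⁻¹ ≤ C := (hC₀ p hp).trans (le_of_max_le_right hC)
  rw [rpow_inv_le_iff_of_pos (div_nonneg (hM p) (hN p).le) (by linarith [le_max_left 1 C₀])
    hp', rpow_natCast, div_le_iff₀ (hN p)] at hroot
  exact hroot

lemma seqQuot_le_pow_mul_seqQuot_two_mul {M N : ℕ → ℝ} (hM : ∀ p, 0 < M p)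
    (hN : ∀ p, 0 < N p) (hMlc : LogConvex M) (hNlc : LogConvex N) {C : ℝ} (hC : 0 ≤ C)
    {p : ℕ} (hp : 1 ≤ p) (hMN : M p ≤ C ^ p * N p) (hNM : N (2 * p) ≤ C ^ (2 * p) * M (2 * p)) :
    seqQuot N p ≤ C ^ 3 * seqQuot M (2 * p) := by
  have hpow : N p * seqQuot N p ^ p ≤ N p * (C ^ 3 * seqQuot M (2 * p)) ^ p :=
    calc N p * seqQuot N p ^ p ≤ N (2 * p) := by
          simpa [two_mul] using hNlc.mul_seqQuot_pow_le hN hp p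
      _ ≤ C ^ (2 * p) * M (2 * p) := hNM
      _ ≤ C ^ (2 * p) * (M p * seqQuot M (2 * p) ^ p) := by
          gcongr
          simpa [two_mul] using hMlc.le_mul_seqQuot_pow hM hp p
      _ ≤ C ^ (2 * p) * (C ^ p * N p * seqQuot M (2 * p) ^ p) := by
          have := seqQuot_pos hM (2 * p)
          gcongr
      _ = N p * (C ^ 3 * seqQuot M (2 * p)) ^ p := by ring
  exact le_of_pow_le_pow_left₀ (by omega) (by have := seqQuot_pos hM (2 * p); positivity)
    (le_of_mul_le_mul_left hpow (hN p))

lemma rpow_inv_natCast_le_mul {x y C : ℝ} {q : ℕ} (hq : q ≠ 0) (hx : 0 ≤ x) (hy : 0 ≤ y)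
    (hC : 0 ≤ C) (h : x ≤ C ^ q * y) : x ^ (q : ℝ)⁻¹ ≤ C * y ^ (q : ℝ)⁻¹ := by
  calc x ^ (q : ℝ)⁻¹ ≤ (C ^ q * y) ^ (q : ℝ)⁻¹ := by gcongr
    _ = C * y ^ (q : ℝ)⁻¹ := by
      rw [mul_rpow (by positivity) hy, pow_rpow_inv_natCast hC hq]

theorem stmt6_general (M N : ℕ → ℝ) (hMpos : ∀ p, 0 < M p) (hNpos : ∀ p, 0 < N p)
    (hMlc : ∀ p : ℕ, 1 ≤ p → (M p) ^ 2 ≤ M (p - 1) * M (p + 1))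
    (hNlc : ∀ p : ℕ, 1 ≤ p → (N p) ^ 2 ≤ N (p - 1) * N (p + 1))
    (a : ℕ) (hgen : genMG M a)
    (hMN : Preceq M N) (hNM : Preceq N M) :
    genMG N (2 * a) := by
  obtain ⟨A, hA1, hA⟩ := hgen
  obtain ⟨C, hC1, hMN, hNM⟩ := ((eventually_ge_atTop 1).and
    ((hMN.eventually_le_pow_mul (fun p => (hMpos p).le) hNpos).and
      (hNM.eventually_le_pow_mul (fun p => (hNpos p).le) hMpos))).exists
  refine ⟨A * C ^ 4, one_le_mul_of_one_le_of_one_le hA1 (one_le_pow₀ hC1), fun p hp => ?_⟩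
  have hq : a * (2 * p) = 2 * a * p := by ring
  have hAp := hA (2 * p) (by omega)
  rw [← Nat.cast_mul, hq] at hAp
  rw [← Nat.cast_mul]
  calc seqQuot N p ≤ C ^ 3 * seqQuot M (2 * p) :=
        seqQuot_le_pow_mul_seqQuot_two_mul hMpos hNpos hMlc hNlc (by linarith) hp
          (hMN p hp) (hNM (2 * p) (by omega))
    _ ≤ C ^ 3 * (A * (C * N (2 * a * p) ^ ((2 * a * p : ℕ) : ℝ)⁻¹)) := by
        gcongr
        refine hAp.trans ?_
        gcongr
        rcases Nat.eq_zero_or_pos (2 * a * p) with h0 | hpos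
        · simpa [h0] using hC1
        exact rpow_inv_natCast_le_mul hpos.ne' (hMpos _).le (hNpos _).le (by linarith)
          (hMN _ hpos)
    _ = A * C ^ 4 * N (2 * a * p) ^ ((2 * a * p : ℕ) : ℝ)⁻¹ := by ring

theorem stmt6 (M N : ℕ → ℝ) (hMpos : ∀ p, 0 < M p) (hNpos : ∀ p, 0 < N p)
    (hM0 : M 0 = 1) (hN0 : N 0 = 1)
    (hMlc : ∀ p : ℕ, 1 ≤ p → (M p) ^ 2 ≤ M (p - 1) * M (p + 1))
    (hNlc : ∀ p : ℕ, 1 ≤ p → (N p) ^ 2 ≤ N (p - 1) * N (p + 1))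
    (a : ℕ) (ha : 0 < a) (hgen : genMG M a)
    (hMN : Preceq M N) (hNM : Preceq N M) :
    genMG N (2 * a) :=
  stmt6_general M N hMpos hNpos hMlc hNlc a hgen hMN hNM
end

section
/- Let ω ∈ W₀ with associated weight matrix {W^(ℓ) : ℓ > 0}. If there exist ℓ₁, ℓ > 0 with ℓ₁ > 2ℓ such that W^(ℓ₁) ≼ W^(ℓ), then ω satisfies (ω₆). -/
open Real Filter Set

section Aux

variable {ω : ℝ → ℝ}

/-- The set defining `phiStar`. -/
def phiSet (ω : ℝ → ℝ) (x : ℝ) : Set ℝ :=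
  {z : ℝ | ∃ y : ℝ, 0 ≤ y ∧ z = x * y - ω (Real.exp y)}

lemma phiStar_eq (x : ℝ) : phiStar ω x = sSup (phiSet ω x) := rfl

lemma aux_mem (x y : ℝ) (hy : 0 ≤ y) : x * y - ω (Real.exp y) ∈ phiSet ω x :=
  ⟨y, hy, rfl⟩

lemma aux_nonempty (x : ℝ) : (phiSet ω x).Nonempty :=
  ⟨_, aux_mem x 0 le_rfl⟩

lemma aux_omega_one (hω : IsW0 ω) : ω 1 = 0 :=
  hω.2.2.1 1 ⟨zero_le_one, le_rfl⟩

lemma aux_nonneg (hω : IsW0 ω) : ∀ t : ℝ, 0 ≤ t → 0 ≤ ω t := by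
  intro t ht
  rcases le_or_gt t 1 with h1 | h1
  · exact (hω.2.2.1 t ⟨ht, h1⟩).ge
  · have := hω.2.1 (Set.mem_Ici.2 (zero_le_one)) (Set.mem_Ici.2 ht) h1.le
    rw [aux_omega_one hω] at this
    exact this

lemma aux_phi_nonneg (hω : IsW0 ω) (y : ℝ) : 0 ≤ ω (Real.exp y) :=
  aux_nonneg hω _ (Real.exp_pos y).le

lemma aux_phi_mono (hω : IsW0 ω) {a b : ℝ} (hab : a ≤ b) :
    ω (Real.exp a) ≤ ω (Real.exp b) :=
  hω.2.1 (Set.mem_Ici.2 (Real.exp_pos a).le) (Set.mem_Ici.2 (Real.exp_pos b).le)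
    (Real.exp_le_exp.2 hab)

/-- Boundedness of the defining set of `phiStar`, for `x ≥ 0`. -/
lemma aux_bdd (hω : IsW0 ω) (x : ℝ) (hx : 0 ≤ x) : BddAbove (phiSet ω x) := by
  have hc : (0 : ℝ) < (x + 1)⁻¹ := by positivity
  obtain ⟨T, hT⟩ := Filter.eventually_atTop.1 (hω.2.2.2.2.1.def hc)
  set Y : ℝ := max (Real.log (max T 1)) 0 with hY
  have hY0 : 0 ≤ Y := le_max_right _ _
  refine ⟨x * Y, ?_⟩
  rintro z ⟨y, hy, rfl⟩
  rcases le_or_gt y Y with hyY | hyY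
  · have : x * y ≤ x * Y := mul_le_mul_of_nonneg_left hyY hx
    have h0 := aux_phi_nonneg hω y
    linarith
  · -- y > Y, so exp y ≥ T
    have hTexp : T ≤ Real.exp y := by
      have h1 : Real.log (max T 1) ≤ y := le_of_lt (lt_of_le_of_lt (le_max_left _ _) hyY)
      have := Real.exp_le_exp.2 h1
      rw [Real.exp_log (lt_of_lt_of_le zero_lt_one (le_max_right T 1))] at this
      exact le_trans (le_max_left T 1) this
    have hkey := hT (Real.exp y) hTexp
    rw [Real.log_exp] at hkey
    have hy0' : 0 ≤ y := hy
    rw [Real.norm_eq_abs, Real.norm_eq_abs, abs_of_nonneg hy0',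
      abs_of_nonneg (aux_phi_nonneg hω y)] at hkey
    -- y ≤ (x+1)⁻¹ * ω (exp y), hence (x+1) * y ≤ ω (exp y)
    have hxy : (x + 1) * y ≤ ω (Real.exp y) := by
      calc (x+1) * y ≤ (x+1) * ((x + 1)⁻¹ * ω (Real.exp y)) :=
            mul_le_mul_of_nonneg_left hkey (by positivity)
        _ = ω (Real.exp y) := by field_simp
    nlinarith [mul_nonneg hx hY0]

lemma aux_le_phiStar (hω : IsW0 ω) (x : ℝ) (hx : 0 ≤ x) (y : ℝ) (hy : 0 ≤ y) :
    x * y - ω (Real.exp y) ≤ phiStar ω x :=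
  le_csSup (aux_bdd hω x hx) (aux_mem x y hy)

lemma aux_phiStar_nonneg (hω : IsW0 ω) (x : ℝ) (hx : 0 ≤ x) : 0 ≤ phiStar ω x := by
  have := aux_le_phiStar hω x hx 0 le_rfl
  rw [Real.exp_zero, aux_omega_one hω] at this
  linarith

lemma aux_phiStar_mono (hω : IsW0 ω) {a b : ℝ} (ha : 0 ≤ a) (hab : a ≤ b) :
    phiStar ω a ≤ phiStar ω b := by
  refine csSup_le (aux_nonempty a) ?_
  rintro z ⟨y, hy, rfl⟩
  calc a * y - ω (Real.exp y) ≤ b * y - ω (Real.exp y) := by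
        have : a * y ≤ b * y := mul_le_mul_of_nonneg_right hab hy
        linarith
    _ ≤ phiStar ω b := aux_le_phiStar hω b (ha.trans hab) y hy

/-- `phiStar x / x` is monotone: for `0 < a ≤ b`, `phiStar a ≤ (a/b) phiStar b`. -/
lemma aux_phiStar_ratio (hω : IsW0 ω) {a b : ℝ} (ha : 0 ≤ a) (hab : a ≤ b) (hb : 0 < b) :
    phiStar ω a ≤ (a / b) * phiStar ω b := by
  refine csSup_le (aux_nonempty a) ?_
  rintro z ⟨y, hy, rfl⟩
  have h1 : a * y - ω (Real.exp y) ≤ (a / b) * (b * y - ω (Real.exp y)) := by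
    have h2 : (a / b) * ω (Real.exp y) ≤ ω (Real.exp y) := by
      have : a / b ≤ 1 := (div_le_one hb).2 hab
      nlinarith [aux_phi_nonneg hω y]
    have : (a / b) * (b * y) = a * y := by field_simp
    nlinarith
  refine h1.trans ?_
  exact mul_le_mul_of_nonneg_left
    (aux_le_phiStar hω b (ha.trans hab) y hy) (by positivity)

/-- Approximate subgradient: for any `y ≥ 0` and `δ > 0` there is `x ≥ 0` with
`phiStar x ≤ x y - ω(e^y) + δ`. -/
lemma aux_subgradient (hω : IsW0 ω) (y : ℝ) (hy : 0 ≤ y) (δ : ℝ) (hδ : 0 < δ) :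
    ∃ x : ℝ, 0 ≤ x ∧ phiStar ω x ≤ x * y - ω (Real.exp y) + δ := by
  have hca : ContinuousAt (fun s : ℝ => ω (Real.exp s)) y := by
    have h1 : ContinuousWithinAt ω (Set.Ici 0) (Real.exp y) :=
      hω.1 _ (Set.mem_Ici.2 (Real.exp_pos y).le)
    have h2 : ContinuousAt ω (Real.exp y) :=
      h1.continuousAt (Ici_mem_nhds (Real.exp_pos y))
    exact h2.comp Real.continuous_exp.continuousAt
  have hev : ∀ᶠ z in nhds y, ω (Real.exp z) < ω (Real.exp y) + δ :=
    hca (Iio_mem_nhds (by linarith))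
  obtain ⟨r, hr, hball⟩ := Metric.eventually_nhds_iff.1 hev
  set ε : ℝ := r / 2 with hεdef
  have hε : 0 < ε := by positivity
  have hδ' : ω (Real.exp (y + ε)) - ω (Real.exp y) < δ := by
    have : dist (y + ε) y < r := by
      rw [Real.dist_eq]
      simp only [add_sub_cancel_left]
      rw [abs_of_pos hε]
      linarith
    have := hball this
    linarith
  set x : ℝ := (ω (Real.exp (y + ε)) - ω (Real.exp y)) / ε with hxdef
  have hnum : 0 ≤ ω (Real.exp (y + ε)) - ω (Real.exp y) := by
    have := aux_phi_mono hω (by linarith : y ≤ y + ε)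
    linarith
  have hx0 : 0 ≤ x := div_nonneg hnum hε.le
  have hxε : x * ε = ω (Real.exp (y + ε)) - ω (Real.exp y) := by
    rw [hxdef]; field_simp
  refine ⟨x, hx0, csSup_le (aux_nonempty x) ?_⟩
  rintro z ⟨y', hy', rfl⟩
  have hconv := hω.2.2.2.2.2
  rcases lt_or_ge y' y with hlt | hge
  · -- y' < y < y + ε : slope inequality
    have hs := hconv.slope_mono_adjacent (Set.mem_univ y') (Set.mem_univ (y + ε))
      hlt (by linarith : y < y + ε)
    have hx' : (ω (Real.exp y) - ω (Real.exp y')) / (y - y') ≤ x := by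
      have : (ω (Real.exp (y+ε)) - ω (Real.exp y)) / (y + ε - y) = x := by
        rw [hxdef]; ring_nf
      linarith [hs, this.ge, this.le]
    have hpos : 0 < y - y' := by linarith
    rw [div_le_iff₀ hpos] at hx'
    nlinarith
  · rcases le_or_gt y' (y + ε) with hle2 | hgt2
    · -- y ≤ y' ≤ y + ε
      have h1 : ω (Real.exp y) ≤ ω (Real.exp y') := aux_phi_mono hω hge
      have h2 : x * y' ≤ x * (y + ε) := mul_le_mul_of_nonneg_left hle2 hx0
      nlinarith
    · -- y + ε < y'
      have hs := hconv.slope_mono_adjacent (Set.mem_univ y) (Set.mem_univ y')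
        (by linarith : y < y + ε) hgt2
      have hxeq : (ω (Real.exp (y+ε)) - ω (Real.exp y)) / (y + ε - y) = x := by
        rw [hxdef]; ring_nf
      rw [hxeq] at hs
      have hpos : 0 < y' - (y + ε) := by linarith
      rw [le_div_iff₀ hpos] at hs
      nlinarith

end Aux

theorem stmt8 (ω : ℝ → ℝ) (hω : IsW0 ω) (l1 l : ℝ) (hl : 0 < l) (hll : 2 * l < l1)
    (h : Preceq (Wmat ω l1) (Wmat ω l)) : Omega6 ω := by
  have hl1 : 0 < l1 := by linarith
  obtain ⟨C, hC⟩ := h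
  set K : ℝ := max (Real.log C) 0 with hKdef
  have hK0 : 0 ≤ K := le_max_right _ _
  -- Step 1: the discrete inequality for phiStar
  have hKey : ∀ p : ℕ, 1 ≤ p →
      phiStar ω (l1 * p) / l1 ≤ phiStar ω (l * p) / l + p * K := by
    intro p hp
    have hCp := hC p hp
    have hp0 : (0:ℝ) < p := by exact_mod_cast hp
    unfold Wmat at hCp
    rw [← Real.exp_sub, ← Real.exp_log (Real.exp_pos _), Real.log_exp,
      ← Real.exp_mul] at hCp
    have hCpos : (0:ℝ) < C := lt_of_lt_of_le (Real.exp_pos _) hCp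
    have := Real.log_le_log (Real.exp_pos _) hCp
    rw [Real.log_exp] at this
    have h2 : (phiStar ω (l1 * p) / l1 - phiStar ω (l * p) / l) ≤ p * Real.log C := by
      have hinv : (0:ℝ) < (p:ℝ)⁻¹ := by positivity
      calc phiStar ω (l1 * p) / l1 - phiStar ω (l * p) / l
          = ((phiStar ω (l1 * p) / l1 - phiStar ω (l * p) / l) * (p:ℝ)⁻¹) * p := by
            field_simp
        _ ≤ Real.log C * p := mul_le_mul_of_nonneg_right this hp0.le
        _ = p * Real.log C := mul_comm _ _
    have h3 : (p:ℝ) * Real.log C ≤ p * K := by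
      exact mul_le_mul_of_nonneg_left (le_max_left _ _) hp0.le
    linarith
  -- Step 2: the doubling inequality
  have hDouble : ∀ p : ℕ, 1 ≤ p →
      phiStar ω (2 * l * p) ≤ 2 * phiStar ω (l * p) + 2 * l * p * K := by
    intro p hp
    have hp0 : (0:ℝ) < p := by exact_mod_cast hp
    have h1 : phiStar ω (2 * l * p) ≤ (2 * l * p / (l1 * p)) * phiStar ω (l1 * p) :=
      aux_phiStar_ratio hω (by positivity)
        (by nlinarith) (by positivity)
    have h2 : phiStar ω (l1 * p) ≤ l1 * (phiStar ω (l * p) / l + p * K) := by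
      have := hKey p hp
      calc phiStar ω (l1 * p) = l1 * (phiStar ω (l1 * p) / l1) := by field_simp
        _ ≤ l1 * (phiStar ω (l * p) / l + p * K) :=
            mul_le_mul_of_nonneg_left this hl1.le
    have h3 : (2 * l * p / (l1 * p)) * phiStar ω (l1 * p)
        ≤ (2 * l * p / (l1 * p)) * (l1 * (phiStar ω (l * p) / l + p * K)) :=
      mul_le_mul_of_nonneg_left h2 (by positivity)
    have h4 : (2 * l * p / (l1 * p)) * (l1 * (phiStar ω (l * p) / l + p * K))
        = 2 * phiStar ω (l * p) + 2 * l * p * K := by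
      field_simp
    linarith
  -- Step 3: main inequality 2φ(y) ≤ φ(y+K) + 2 l y
  have hmain : ∀ y : ℝ, 0 ≤ y →
      2 * ω (Real.exp y) ≤ ω (Real.exp (y + K)) + 2 * l * y := by
    intro y hy
    refine le_of_forall_pos_le_add ?_
    intro ε hε
    obtain ⟨x, hx0, hxsub⟩ := aux_subgradient hω y hy (ε / 2) (by positivity)
    have hφK : 0 ≤ ω (Real.exp (y + K)) := aux_phi_nonneg hω _
    rcases lt_or_ge x l with hxl | hxl
    · -- small x : φ(y) ≤ x y + δ ≤ l y + δ
      have h1 : 0 ≤ phiStar ω x := aux_phiStar_nonneg hω x hx0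
      have h2 : x * y ≤ l * y := mul_le_mul_of_nonneg_right hxl.le hy
      nlinarith
    · -- x ≥ l : use p = ⌊x/l⌋
      set p : ℕ := ⌊x / l⌋₊ with hpdef
      have hxl' : (1:ℝ) ≤ x / l := (one_le_div hl).2 hxl
      have hp1 : 1 ≤ p := by
        rw [hpdef]
        exact_mod_cast Nat.le_floor (by exact_mod_cast hxl')
      have hfl : (p:ℝ) ≤ x / l := Nat.floor_le (by positivity)
      have hlp : l * p ≤ x := by
        rw [mul_comm]
        exact (le_div_iff₀ hl).1 hfl
      have hfl2 : x / l < p + 1 := Nat.lt_floor_add_one _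
      have hlp2 : x < l * (p + 1) := by
        rw [mul_comm] at *
        exact (div_lt_iff₀ hl).1 hfl2
      have hlp0 : (0:ℝ) ≤ l * p := by positivity
      have key1 : (2 * l * p) * (y + K) - ω (Real.exp (y + K)) ≤ phiStar ω (2 * l * p) :=
        aux_le_phiStar hω _ (by positivity) _ (by linarith)
      have key2 := hDouble p hp1
      have key3 : phiStar ω (l * p) ≤ phiStar ω x := aux_phiStar_mono hω hlp0 hlp
      -- combine
      have hψnn : 0 ≤ phiStar ω x := aux_phiStar_nonneg hω x hx0
      have hxy : x * y ≥ 0 := mul_nonneg hx0 hy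
      nlinarith [mul_le_mul_of_nonneg_right (show 2 * (x - l) ≤ 2 * l * p by nlinarith) hy]
  -- Step 4: absorb the linear term using log = o(ω)
  have hc8 : (0:ℝ) < (8 * l)⁻¹ := by positivity
  obtain ⟨T, hT⟩ := Filter.eventually_atTop.1 (hω.2.2.2.2.1.def hc8)
  set Y : ℝ := max (Real.log (max T 1)) 0 with hYdef
  have hY0 : 0 ≤ Y := le_max_right _ _
  have h8 : ∀ y : ℝ, Y ≤ y → 2 * l * y ≤ (1/4) * ω (Real.exp y) := by
    intro y hy
    have hy0 : 0 ≤ y := hY0.trans hy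
    have hTexp : T ≤ Real.exp y := by
      have h1 : Real.log (max T 1) ≤ y := le_trans (le_max_left _ _) hy
      have := Real.exp_le_exp.2 h1
      rw [Real.exp_log (lt_of_lt_of_le zero_lt_one (le_max_right T 1))] at this
      exact le_trans (le_max_left T 1) this
    have hkey := hT (Real.exp y) hTexp
    rw [Real.log_exp, Real.norm_eq_abs, Real.norm_eq_abs, abs_of_nonneg hy0,
      abs_of_nonneg (aux_phi_nonneg hω y)] at hkey
    have h8l : 8 * l * y ≤ ω (Real.exp y) := by
      calc 8 * l * y ≤ 8 * l * ((8 * l)⁻¹ * ω (Real.exp y)) :=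
            mul_le_mul_of_nonneg_left hkey (by positivity)
        _ = ω (Real.exp y) := by field_simp
    linarith
  set B : ℝ := ω (Real.exp Y) with hBdef
  have hB0 : 0 ≤ B := aux_phi_nonneg hω Y
  -- (7/4) φ(y) ≤ φ(y+K) + (7/4) B for all y ≥ 0
  have hstar : ∀ y : ℝ, 0 ≤ y →
      (7/4) * ω (Real.exp y) ≤ ω (Real.exp (y + K)) + (7/4) * B := by
    intro y hy
    have hφK : 0 ≤ ω (Real.exp (y + K)) := aux_phi_nonneg hω _
    rcases le_or_gt Y y with hYy | hYy
    · have := h8 y hYy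
      have := hmain y hy
      linarith
    · have : ω (Real.exp y) ≤ B := aux_phi_mono hω hYy.le
      linarith
  -- iterate twice: 2 φ(y) ≤ φ(y + 2K) + 5 B
  have hfinal : ∀ y : ℝ, 0 ≤ y →
      2 * ω (Real.exp y) ≤ ω (Real.exp (y + 2 * K)) + 5 * B := by
    intro y hy
    have h1 := hstar y hy
    have h2 := hstar (y + K) (by linarith)
    have hφ0 : 0 ≤ ω (Real.exp y) := aux_phi_nonneg hω y
    have heq : y + K + K = y + 2 * K := by ring
    rw [heq] at h2
    nlinarith
  -- Conclusion
  refine ⟨max (Real.exp (2 * K)) (5 * B), ?_, ?_⟩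
  · refine le_trans ?_ (le_max_left _ _)
    rw [← Real.exp_zero]
    exact Real.exp_le_exp.2 (by linarith)
  · intro t ht
    set H : ℝ := max (Real.exp (2 * K)) (5 * B) with hHdef
    have hH1 : 1 ≤ H := by
      refine le_trans ?_ (le_max_left _ _)
      rw [← Real.exp_zero]
      exact Real.exp_le_exp.2 (by linarith)
    rcases le_or_gt t 1 with ht1 | ht1
    · have hz : ω t = 0 := hω.2.2.1 t ⟨ht, ht1⟩
      have : 0 ≤ ω (H * t) := aux_nonneg hω _ (by positivity)
      rw [hz]
      linarith
    · set y : ℝ := Real.log t with hydef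
      have hy0 : 0 ≤ y := Real.log_nonneg ht1.le
      have hty : Real.exp y = t := Real.exp_log (by linarith)
      have h1 := hfinal y hy0
      rw [hty] at h1
      have h2 : Real.exp (y + 2 * K) = Real.exp (2 * K) * t := by
        rw [Real.exp_add, hty, mul_comm]
      rw [h2] at h1
      have h3 : ω (Real.exp (2 * K) * t) ≤ ω (H * t) := by
        refine hω.2.1 (Set.mem_Ici.2 (by positivity)) (Set.mem_Ici.2 (by positivity)) ?_
        exact mul_le_mul_of_nonneg_right (le_max_left _ _) ht
      have h4 : 5 * B ≤ H := le_max_right _ _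
      linarith
end
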